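/- For every k ∈ ℕ there exists an achievable Cantorval D such that the k-fold algebraic sum D + D + ⋯ + D is also a Cantorval. Specifically, for any natural m > (1+3k+√(9k²+42k+1))/6 and q ∈ [2/(3m²−m+2), 2/(3mk+3k+2)), the set D = A(2m, 2m−1, …, m+1, m; q) works. -/

import Mathlib

open Set MeasureTheory Pointwise

/-- The achievement set (set of all subsums) of the series `∑ a n`. -/
noncomputable def achievementSet (a : ℕ → ℝ) : Set ℝ :=
  {x | ∃ I : Set ℕ, HasSum (fun i : I => a i) x}

/-- `tail a n` is the sum of the terms with index `≥ n`. -/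
noncomputable def tail (a : ℕ → ℝ) (n : ℕ) : ℝ := ∑' i : ℕ, a (n + i)

/-- The set of `k`-initial subsums: sums over subsets of the first `k` terms. -/
def Fset (a : ℕ → ℝ) (k : ℕ) : Set ℝ :=
  {x | ∃ I : Finset ℕ, I ⊆ Finset.range k ∧ x = ∑ i ∈ I, a i}

/-- The `k`-th iterate `I_k = ⋃_{f ∈ F_k} [f, f + r_k]`. -/
noncomputable def iter (a : ℕ → ℝ) (k : ℕ) : Set ℝ :=
  ⋃ f ∈ Fset a k, Set.Icc f (f + tail a k)

/-- A Cantor set: a nonempty compact perfect nowhere dense subset of `ℝ`. -/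
def IsCantorSet (C : Set ℝ) : Prop :=
  C.Nonempty ∧ IsCompact C ∧ Perfect C ∧ interior C = ∅

/-- A Cantorval: a nonempty compact set equal to the closure of its interior such that
both endpoints of every nontrivial connected component are accumulation points of
trivial (one-point) components. -/
def IsCantorval (P : Set ℝ) : Prop :=
  P.Nonempty ∧ IsCompact P ∧ P = closure (interior P) ∧
  ∀ x ∈ P, (connectedComponentIn P x).Nontrivial →
    ∀ y ∈ ({sInf (connectedComponentIn P x), sSup (connectedComponentIn P x)} : Set ℝ),
      ∀ ε > 0, ∃ z ∈ P, z ≠ y ∧ |z - y| < ε ∧ connectedComponentIn P z = {z}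

/-- The multigeometric sequence (l 0, l 1, ..., l (d-1); q): term (n-1)d + i equals
l i * q ^ n; with 0-indexing, term j equals l (j % d) * q ^ (j / d + 1). -/
noncomputable def mgSeq (l : ℕ → ℝ) (d : ℕ) (q : ℝ) (n : ℕ) : ℝ :=
  l (n % d) * q ^ (n / d + 1)

/-- The algebraic sum of k copies of D (the empty sum being {0}). -/
def sumN (D : Set ℝ) : ℕ → Set ℝ
  | 0 => {0}
  | n + 1 => sumN D n + D


open Set Filter Topology

namespace Stmt9

noncomputable def tq (q : ℝ) : ℝ := q / (1 - q)

/-- digit sets -/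
def digitSet (P : ℕ → Prop) (q : ℝ) : Set ℝ :=
  {x | ∃ s : ℕ → ℕ, (∀ n, P (s n)) ∧ HasSum (fun n => (s n : ℝ) * q ^ (n + 1)) x}

/-- admissible digits -/
def Sd (μ M c : ℕ) : Prop := c = 0 ∨ (μ ≤ c ∧ c + μ ≤ M) ∨ c = M

structure Hyp (μ M : ℕ) (q : ℝ) : Prop where
  hq : 0 < q
  hμ : 1 ≤ μ
  h2μ : 2 * μ < M
  hμ2 : μ ^ 2 ≤ M
  hgap : (M : ℝ) * q < μ * (1 - q)
  hfill : 1 - q ≤ ((M : ℝ) - 2 * μ) * q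

namespace Hyp

variable {μ M : ℕ} {q : ℝ}

lemma hμR (h : Hyp μ M q) : (1:ℝ) ≤ μ := by exact_mod_cast h.hμ

lemma hμM (h : Hyp μ M q) : (μ : ℝ) ≤ M := by
  have h2 : (μ:ℝ)^2 ≤ M := by exact_mod_cast h.hμ2
  nlinarith [h.hμR]

lemma hq2 (h : Hyp μ M q) : q < 1/2 := by
  have h1 := h.hgap
  have h2 : (μ:ℝ) * q ≤ M * q := by nlinarith [h.hμM, h.hq]
  nlinarith [h.hμR, h.hq]

lemma hq1 (h : Hyp μ M q) : q < 1 := by linarith [h.hq2]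

lemma h1q (h : Hyp μ M q) : (0:ℝ) < 1 - q := by linarith [h.hq2]

lemma ht_pos (h : Hyp μ M q) : 0 < tq q := div_pos h.hq h.h1q

lemma htq (h : Hyp μ M q) : q ≤ tq q := by
  rw [tq, le_div_iff₀ h.h1q]; nlinarith [h.hq]

lemma ht_eq (h : Hyp μ M q) : tq q * (1 - q) = q := by
  exact div_mul_cancel₀ q (ne_of_gt h.h1q)

lemma ht1 (h : Hyp μ M q) : tq q < 1 := by
  rw [tq, div_lt_one h.h1q]; linarith [h.hq2]

lemma hMpos (h : Hyp μ M q) : (0:ℝ) < M := lt_of_lt_of_le (by linarith [h.hμR]) h.hμM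

lemma hMt (h : Hyp μ M q) : (M : ℝ) * tq q < μ := by
  rw [tq, show (M:ℝ) * (q / (1-q)) = (M * q) / (1-q) by ring, div_lt_iff₀ h.h1q]
  linarith [h.hgap]

lemma hRt (h : Hyp μ M q) : (1:ℝ) ≤ ((M : ℝ) - 2*μ) * tq q := by
  rw [tq, show ((M:ℝ) - 2*μ) * (q / (1-q)) = (((M:ℝ)-2*μ) * q) / (1-q) by ring,
    le_div_iff₀ h.h1q]
  linarith [h.hfill]

lemma hμt1 (h : Hyp μ M q) : (μ:ℝ) * tq q < 1 := by
  have h1 : (μ:ℝ) * ((M:ℝ) * tq q) < μ * μ := by nlinarith [h.hMt, h.hμR]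
  have h2 : (μ:ℝ) * μ ≤ M := by
    have h3 : ((μ:ℝ))^2 ≤ M := by exact_mod_cast h.hμ2
    nlinarith
  nlinarith [h.ht_pos, h.hμR, h.hMpos]

lemma hasSum_geom (h : Hyp μ M q) : HasSum (fun n : ℕ => q ^ (n+1)) (tq q) := by
  have h0 : |q| < 1 := by rw [abs_of_pos h.hq]; exact h.hq1
  have h2 := (hasSum_geometric_of_abs_lt_one h0).mul_left q
  have h3 : (fun n : ℕ => q * q ^ n) = fun n : ℕ => q ^ (n+1) := by
    funext n; rw [pow_succ]; ring
  rw [h3] at h2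
  have h4 : tq q = q * (1 - q)⁻¹ := by rw [tq, div_eq_mul_inv]
  rw [h4]; exact h2

lemma hqpow (h : Hyp μ M q) (n : ℕ) : (0:ℝ) < q ^ n := pow_pos h.hq n

lemma hμltM (h : Hyp μ M q) : (μ:ℝ) < M := by
  have : μ < M := by have := h.h2μ; have := h.hμ; omega
  exact_mod_cast this

/-- bound on digit value -/
lemma digit_le (h : Hyp μ M q) {c : ℕ} (hc : Sd μ M c) : (c : ℝ) ≤ M := by
  rcases hc with rfl | ⟨h1, h2⟩ | rfl
  · simpa using h.hMpos.le
  · have : (c:ℝ) + μ ≤ M := by exact_mod_cast h2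
    linarith [h.hμR]
  · exact le_refl _

lemma summable_digits (h : Hyp μ M q) {s : ℕ → ℕ} (hs : ∀ n, (s n : ℝ) ≤ M) :
    Summable (fun n => (s n : ℝ) * q ^ (n + 1)) := by
  apply Summable.of_nonneg_of_le (fun n => mul_nonneg (Nat.cast_nonneg _) (h.hqpow (n+1)).le)
    (fun n => mul_le_mul_of_nonneg_right (hs n) (h.hqpow (n+1)).le)
  exact (h.hasSum_geom.mul_left (M:ℝ)).summable

lemma digit_valid_le (h : Hyp μ M q) {s : ℕ → ℕ} (hs : ∀ n, Sd μ M (s n)) (n : ℕ) :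
    (s n : ℝ) ≤ M := h.digit_le (hs n)

lemma mem_nonneg (h : Hyp μ M q) {x : ℝ} (hx : x ∈ digitSet (Sd μ M) q) : 0 ≤ x := by
  obtain ⟨s, hs, hsum⟩ := hx
  exact hasSum_le (fun n => mul_nonneg (Nat.cast_nonneg _) (h.hqpow (n+1)).le) hasSum_zero hsum

lemma mem_le (h : Hyp μ M q) {x : ℝ} (hx : x ∈ digitSet (Sd μ M) q) : x ≤ M * tq q := by
  obtain ⟨s, hs, hsum⟩ := hx
  refine hasSum_le (fun n => ?_) hsum (h.hasSum_geom.mul_left (M:ℝ))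
  exact mul_le_mul_of_nonneg_right (h.digit_valid_le hs n) (h.hqpow (n+1)).le

lemma zero_mem (h : Hyp μ M q) : (0:ℝ) ∈ digitSet (Sd μ M) q := by
  refine ⟨fun _ => 0, fun n => Or.inl rfl, ?_⟩
  simpa using hasSum_zero

lemma top_mem (h : Hyp μ M q) : (M:ℝ) * tq q ∈ digitSet (Sd μ M) q := by
  refine ⟨fun _ => M, fun n => Or.inr (Or.inr rfl), h.hasSum_geom.mul_left (M:ℝ)⟩

lemma mem_step (h : Hyp μ M q) {c : ℕ} (hc : Sd μ M c) {y : ℝ}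
    (hy : y ∈ digitSet (Sd μ M) q) : (c:ℝ) * q + q * y ∈ digitSet (Sd μ M) q := by
  obtain ⟨s, hs, hsum⟩ := hy
  refine ⟨fun n => Nat.casesOn n c s, fun n => by cases n <;> simp [hc, hs _], ?_⟩
  have hfun : (fun n : ℕ => ((Nat.casesOn (n+1) c s : ℕ) : ℝ) * q ^ (n + 1 + 1))
      = fun n : ℕ => q * ((s n : ℝ) * q ^ (n + 1)) := by
    funext n
    show ((s n : ℕ) : ℝ) * q ^ (n + 1 + 1) = _
    ring
  have h1 : HasSum (fun n : ℕ => ((Nat.casesOn (n+1) c s : ℕ) : ℝ) * q ^ (n + 1 + 1)) (q * y) := by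
    rw [hfun]; exact hsum.mul_left q
  have h2 := (hasSum_nat_add_iff (f := fun n : ℕ => ((Nat.casesOn n c s : ℕ) : ℝ) * q ^ (n + 1)) 1).mp h1
  simp only [Finset.range_one, Finset.sum_singleton] at h2
  have e : (c:ℝ) * q + q * y = q * y + ((c : ℕ) : ℝ) * q ^ (0 + 1) := by ring
  rw [e]; exact h2

lemma mem_decomp (h : Hyp μ M q) {x : ℝ} (hx : x ∈ digitSet (Sd μ M) q) :
    ∃ c : ℕ, Sd μ M c ∧ ∃ y ∈ digitSet (Sd μ M) q, x = (c:ℝ) * q + q * y := by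
  obtain ⟨s, hs, hsum⟩ := hx
  have hsum' : Summable (fun n => ((s (n+1) : ℝ)) * q ^ (n + 1)) :=
    h.summable_digits (fun n => h.digit_valid_le hs (n+1))
  set y := ∑' n, ((s (n+1) : ℝ)) * q ^ (n + 1) with hy
  have hys : HasSum (fun n => ((s (n+1) : ℝ)) * q ^ (n + 1)) y := hsum'.hasSum
  refine ⟨s 0, hs 0, y, ⟨fun n => s (n+1), fun n => hs (n+1), hys⟩, ?_⟩
  have h1 : HasSum (fun n : ℕ => ((s (n+1) : ℝ)) * q ^ (n + 1 + 1)) (q * y) := by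
    have hf : (fun n : ℕ => ((s (n+1) : ℝ)) * q ^ (n + 1 + 1)) = fun n => q * ((s (n+1) : ℝ) * q ^ (n + 1)) := by
      funext n; ring
    rw [hf]; exact hys.mul_left q
  have h2 := (hasSum_nat_add_iff (f := fun n : ℕ => ((s n : ℝ)) * q ^ (n + 1)) 1).mp h1
  simp only [Finset.range_one, Finset.sum_singleton] at h2
  have := hsum.unique h2
  rw [this]; ring

/-- trichotomy at the top level -/
lemma cover3 (h : Hyp μ M q) {x : ℝ} (hx : x ∈ digitSet (Sd μ M) q) :
    x ≤ M * tq q * q ∨ ((μ:ℝ) * q ≤ x ∧ x ≤ ((M:ℝ) - μ) * q + M * tq q * q) ∨ (M:ℝ) * q ≤ x := by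
  obtain ⟨c, hc, y, hy, rfl⟩ := h.mem_decomp hx
  have hy0 := h.mem_nonneg hy
  have hy1 := h.mem_le hy
  rcases hc with rfl | ⟨h1, h2⟩ | rfl
  · left; simp; nlinarith [h.hq]
  · right; left
    have c1 : (μ:ℝ) ≤ c := by exact_mod_cast h1
    have c2 : (c:ℝ) + μ ≤ M := by exact_mod_cast h2
    constructor <;> nlinarith [h.hq]
  · right; right; nlinarith [h.hq]

lemma ex0 (h : Hyp μ M q) {x : ℝ} (hx : x ∈ digitSet (Sd μ M) q) (hlt : x < (μ:ℝ) * q) :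
    ∃ y ∈ digitSet (Sd μ M) q, x = q * y := by
  obtain ⟨c, hc, y, hy, rfl⟩ := h.mem_decomp hx
  have hy0 := h.mem_nonneg hy
  rcases hc with rfl | ⟨h1, h2⟩ | rfl
  · exact ⟨y, hy, by push_cast; ring⟩
  · have c1 : (μ:ℝ) ≤ c := by exact_mod_cast h1
    nlinarith [h.hq]
  · nlinarith [h.hq, h.hμM]

lemma exμ (h : Hyp μ M q) {x : ℝ} (hx : x ∈ digitSet (Sd μ M) q)
    (hge : (μ:ℝ) * q ≤ x) (hlt : x < ((μ:ℝ)+1) * q) :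
    ∃ y ∈ digitSet (Sd μ M) q, x = (μ:ℝ) * q + q * y := by
  obtain ⟨c, hc, y, hy, rfl⟩ := h.mem_decomp hx
  have hy0 := h.mem_nonneg hy
  have hy1 := h.mem_le hy
  have hμM1 : (μ:ℝ) + 1 ≤ M := by
    have : μ + 1 ≤ M := by have := h.h2μ; have := h.hμ; omega
    exact_mod_cast this
  rcases hc with rfl | ⟨h1, h2⟩ | rfl
  · push_cast at hge ⊢; nlinarith [h.hMt, h.hq]
  · have c1 : (μ:ℝ) ≤ c := by exact_mod_cast h1
    have : (c:ℝ) < μ + 1 := by nlinarith [h.hq]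
    have : (c:ℝ) = μ := by
      have hcc : c < μ + 1 := by exact_mod_cast this
      have : c = μ := by omega
      exact_mod_cast this
    exact ⟨y, hy, by rw [this]⟩
  · nlinarith [h.hq]

lemma exM (h : Hyp μ M q) {x : ℝ} (hx : x ∈ digitSet (Sd μ M) q) (hge : (M:ℝ) * q ≤ x) :
    ∃ y ∈ digitSet (Sd μ M) q, x = (M:ℝ) * q + q * y := by
  obtain ⟨c, hc, y, hy, rfl⟩ := h.mem_decomp hx
  have hy0 := h.mem_nonneg hy
  have hy1 := h.mem_le hy
  rcases hc with rfl | ⟨h1, h2⟩ | rfl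
  · push_cast at hge
    nlinarith [h.hq, mul_le_mul_of_nonneg_left hy1 h.hq.le,
      mul_lt_mul_of_pos_left h.hMt h.hq, mul_le_mul_of_nonneg_left h.hμM h.hq.le]
  · have c2 : (c:ℝ) + μ ≤ M := by exact_mod_cast h2
    nlinarith [h.hq, h.hMt]
  · exact ⟨y, hy, rfl⟩

/-- the two top-level gaps -/
lemma gap_low (h : Hyp μ M q) {x : ℝ} (hx : x ∈ digitSet (Sd μ M) q) :
    ¬ (M * tq q * q < x ∧ x < (μ:ℝ) * q) := by
  rintro ⟨h1, h2⟩
  rcases h.cover3 hx with h3 | ⟨h3, h4⟩ | h3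
  · linarith
  · linarith
  · nlinarith [h.hq, h.hμM]

lemma gap_high (h : Hyp μ M q) {x : ℝ} (hx : x ∈ digitSet (Sd μ M) q) :
    ¬ (((M:ℝ) - μ) * q + M * tq q * q < x ∧ x < (M:ℝ) * q) := by
  rintro ⟨h1, h2⟩
  rcases h.cover3 hx with h3 | ⟨h3, h4⟩ | h3
  · nlinarith [mul_pos (by linarith [h.hμltM] : (0:ℝ) < (M:ℝ) - μ) h.hq]
  · linarith
  · linarith

lemma summable_of_bound (h : Hyp μ M q) (B : ℝ) {s : ℕ → ℕ} (hs : ∀ n, (s n : ℝ) ≤ B) :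
    Summable (fun n => (s n : ℝ) * q ^ (n + 1)) := by
  apply Summable.of_nonneg_of_le (fun n => mul_nonneg (Nat.cast_nonneg _) (h.hqpow (n+1)).le)
    (fun n => mul_le_mul_of_nonneg_right (hs n) (h.hqpow (n+1)).le)
  exact (h.hasSum_geom.mul_left B).summable

/-- greedy digit representation of points of `[0, R t]` with digits `≤ R`. -/
lemma interval_rep (h : Hyp μ M q) (R : ℕ) (hR : (1:ℝ) ≤ (R:ℝ) * tq q) {x : ℝ}
    (hx0 : 0 ≤ x) (hx1 : x ≤ (R:ℝ) * tq q) :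
    ∃ u : ℕ → ℕ, (∀ n, u n ≤ R) ∧ HasSum (fun n => (u n : ℝ) * q ^ (n + 1)) x := by
  classical
  set g : ℝ → ℕ := fun y => min R ⌊y / q⌋₊ with hg
  set nxt : ℝ → ℝ := fun y => (y - (g y : ℝ) * q) / q with hnxt
  have key : ∀ y, 0 ≤ y → y ≤ (R:ℝ) * tq q →
      (g y : ℝ) * q ≤ y ∧ 0 ≤ nxt y ∧ nxt y ≤ (R:ℝ) * tq q := by
    intro y hy0 hy1
    have hq0 := h.hq
    have hfl : (⌊y / q⌋₊ : ℝ) ≤ y / q := Nat.floor_le (by positivity)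
    have hyq : (y / q) * q = y := by field_simp
    by_cases hcase : ⌊y / q⌋₊ ≤ R
    · have hgy : g y = ⌊y / q⌋₊ := min_eq_right hcase
      have h1 : (g y : ℝ) * q ≤ y := by
        rw [hgy]
        calc (⌊y / q⌋₊ : ℝ) * q ≤ (y / q) * q := mul_le_mul_of_nonneg_right hfl hq0.le
        _ = y := hyq
      have h2 : y - (g y : ℝ) * q < q := by
        rw [hgy]
        have h3 : y / q < ⌊y / q⌋₊ + 1 := Nat.lt_floor_add_one (y / q)
        nlinarith [mul_lt_mul_of_pos_right h3 hq0]
      refine ⟨h1, div_nonneg (by linarith) hq0.le, ?_⟩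
      show (y - (g y : ℝ) * q) / q ≤ (R:ℝ) * tq q
      rw [div_le_iff₀ h.hq]
      nlinarith [h.ht_pos]
    · push_neg at hcase
      have hgy : g y = R := min_eq_left (le_of_lt hcase)
      have h1 : (R:ℝ) < ⌊y / q⌋₊ := by exact_mod_cast hcase
      have h2 : (R:ℝ) * q ≤ y := by nlinarith [mul_lt_mul_of_pos_right (lt_of_lt_of_le h1 hfl) hq0]
      have h3 : y - (R:ℝ) * q ≤ (R:ℝ) * tq q * q := by
        have htq : tq q - q = q * tq q := by
          have := h.ht_eq; nlinarith
        nlinarith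
      refine ⟨by rw [hgy]; exact h2, ?_, ?_⟩
      · show (y - (g y : ℝ) * q) / q ≥ 0
        rw [hgy]; exact div_nonneg (by linarith) hq0.le
      · show (y - (g y : ℝ) * q) / q ≤ (R:ℝ) * tq q
        rw [hgy, div_le_iff₀ h.hq]
        nlinarith
  set Y : ℕ → ℝ := fun n => nxt^[n] x with hY
  have hYsucc : ∀ n, Y (n+1) = nxt (Y n) := by
    intro n; rw [hY]; simp [Function.iterate_succ_apply']
  have hYmem : ∀ n, 0 ≤ Y n ∧ Y n ≤ (R:ℝ) * tq q := by
    intro n; induction n with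
    | zero => exact ⟨hx0, hx1⟩
    | succ n ih =>
      rw [hYsucc]
      exact ⟨(key _ ih.1 ih.2).2.1, (key _ ih.1 ih.2).2.2⟩
  set u : ℕ → ℕ := fun n => g (Y n) with hu
  have hrec : ∀ n, Y n = (u n : ℝ) * q + q * Y (n+1) := by
    intro n
    rw [hYsucc]
    show Y n = (g (Y n) : ℝ) * q + q * ((Y n - (g (Y n) : ℝ) * q) / q)
    have hq0 : q ≠ 0 := ne_of_gt h.hq
    field_simp
    ring
  have hpart : ∀ n, x = (∑ i ∈ Finset.range n, (u i : ℝ) * q ^ (i+1)) + q ^ n * Y n := by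
    intro n; induction n with
    | zero => simp [hY]
    | succ n ih =>
      rw [Finset.sum_range_succ]
      rw [ih, hrec n]
      ring
  have huR : ∀ n, u n ≤ R := fun n => min_le_left _ _
  refine ⟨u, huR, ?_⟩
  have hsummable : Summable (fun n => (u n : ℝ) * q ^ (n + 1)) :=
    h.summable_of_bound (R:ℝ) (fun n => by exact_mod_cast huR n)
  rw [hsummable.hasSum_iff_tendsto_nat]
  have hbound : ∀ n, |(∑ i ∈ Finset.range n, (u i : ℝ) * q ^ (i+1)) - x| ≤ (R:ℝ) * tq q * q ^ n := by
    intro n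
    rw [hpart n]
    have h1 := (hYmem n).1
    have h2 := (hYmem n).2
    rw [abs_le]
    constructor <;> nlinarith [h.hqpow n, mul_le_mul_of_nonneg_left h2 (h.hqpow n).le]
  have hto : Tendsto (fun n : ℕ => (R:ℝ) * tq q * q ^ n) atTop (𝓝 0) := by
    rw [show (0:ℝ) = (R:ℝ) * tq q * 0 by ring]
    exact (tendsto_pow_atTop_nhds_zero_of_lt_one h.hq.le h.hq1).const_mul _
  have hsq := squeeze_zero_norm (fun n => by rw [Real.norm_eq_abs]; exact hbound n) hto
  have h6 := hsq.add_const x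
  simp only [sub_add_cancel, zero_add] at h6
  exact h6

/-- the number `M - 2 μ` as a natural number -/
lemma cast_R (h : Hyp μ M q) : ((M - 2*μ : ℕ) : ℝ) = (M:ℝ) - 2*μ := by
  have := h.h2μ
  push_cast [Nat.cast_sub (le_of_lt this)]
  ring

/-- the central interval is contained in the digit set -/
lemma interval_subset (h : Hyp μ M q) :
    Icc ((μ:ℝ) * tq q) (((M:ℝ) - μ) * tq q) ⊆ digitSet (Sd μ M) q := by
  rintro x ⟨hx0, hx1⟩
  have hR : (1:ℝ) ≤ ((M - 2*μ : ℕ):ℝ) * tq q := by rw [h.cast_R]; exact h.hRt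
  obtain ⟨u, huR, hsum⟩ := h.interval_rep (M - 2*μ) hR
    (x := x - (μ:ℝ) * tq q) (by linarith) (by rw [h.cast_R]; nlinarith [h.ht_pos])
  refine ⟨fun n => μ + u n, fun n => ?_, ?_⟩
  · show Sd μ M (μ + u n)
    right; left
    constructor
    · omega
    · have := huR n; have := h.h2μ; omega
  · have h1 : HasSum (fun n => (μ:ℝ) * q ^ (n+1)) ((μ:ℝ) * tq q) := h.hasSum_geom.mul_left _
    have h2 := h1.add hsum
    convert h2 using 2 with n
    · push_cast; ring
    · ring

end Hyp

lemma digit_le_nat {μ M c : ℕ} (hc : Sd μ M c) : c ≤ M := by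
  rcases hc with rfl | ⟨h1, h2⟩ | rfl <;> omega

/-- a gap forces the connected component to stay below it -/
lemma comp_subset_Iic {F : Set ℝ} {x a b : ℝ} (hF : ∀ w ∈ F, ¬(a < w ∧ w < b))
    (hab : a < b) (hx : x ∈ F) (hxa : x ≤ a) : connectedComponentIn F x ⊆ Iic a := by
  intro w hw
  by_contra hwa
  rw [mem_Iic] at hwa; push_neg at hwa
  have hC := isPreconnected_connectedComponentIn (x := x) (F := F)
  have hord := hC.ordConnected
  have hxC := mem_connectedComponentIn hx
  by_cases hwb : w < b
  · exact hF w (connectedComponentIn_subset F x hw) ⟨hwa, hwb⟩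
  · push_neg at hwb
    have hmid : (a+b)/2 ∈ Icc x w := ⟨by linarith, by linarith⟩
    have h2 := hord.out hxC hw hmid
    exact hF _ (connectedComponentIn_subset F x h2) ⟨by linarith, by linarith⟩

lemma comp_subset_Ici {F : Set ℝ} {x a b : ℝ} (hF : ∀ w ∈ F, ¬(a < w ∧ w < b))
    (hab : a < b) (hx : x ∈ F) (hxb : b ≤ x) : connectedComponentIn F x ⊆ Ici b := by
  intro w hw
  by_contra hwa
  rw [mem_Ici] at hwa; push_neg at hwa
  have hC := isPreconnected_connectedComponentIn (x := x) (F := F)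
  have hord := hC.ordConnected
  have hxC := mem_connectedComponentIn hx
  by_cases hwb : a < w
  · exact hF w (connectedComponentIn_subset F x hw) ⟨hwb, hwa⟩
  · push_neg at hwb
    have hmid : (a+b)/2 ∈ Icc w x := ⟨by linarith, by linarith⟩
    have h2 := hord.out hw hxC hmid
    exact hF _ (connectedComponentIn_subset F x h2) ⟨by linarith, by linarith⟩

namespace Hyp

variable {μ M : ℕ} {q : ℝ}

lemma digit_lt_succ {μ M : ℕ} (c : ℕ) (hc : Sd μ M c) : c < M + 1 :=
  Nat.lt_succ_of_le (digit_le_nat hc)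

lemma compact_E (h : Hyp μ M q) : IsCompact (digitSet (Sd μ M) q) := by
  classical
  have hcs : CompactSpace (ℕ → Fin (M+1)) := by infer_instance
  set φ : (ℕ → Fin (M+1)) → ℝ := fun s => ∑' n, ((s n : ℕ) : ℝ) * q ^ (n+1) with hφdef
  have hφ : Continuous φ := by
    apply continuous_tsum (u := fun n => (M:ℝ) * q^(n+1))
    · intro n
      exact (show Continuous fun c : Fin (M+1) => ((c:ℕ):ℝ)*q^(n+1) from
        continuous_of_discreteTopology).comp (continuous_apply n)
    · exact (h.hasSum_geom.mul_left (M:ℝ)).summable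
    · intro n s
      rw [Real.norm_eq_abs, abs_of_nonneg (mul_nonneg (Nat.cast_nonneg _) (h.hqpow (n+1)).le)]
      exact mul_le_mul_of_nonneg_right (by exact_mod_cast (Fin.is_le (s n))) (h.hqpow (n+1)).le
  set C : Set (ℕ → Fin (M+1)) := {s | ∀ n, Sd μ M ((s n : ℕ))} with hCdef
  have hCclosed : IsClosed C := by
    have : C = ⋂ n, (fun s : ℕ → Fin (M+1) => s n) ⁻¹' {c : Fin (M+1) | Sd μ M (c:ℕ)} := by
      ext s; simp [hCdef]
    rw [this]
    exact isClosed_iInter (fun n => IsClosed.preimage (continuous_apply n) (isClosed_discrete _))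
  have hCcomp : IsCompact C := hCclosed.isCompact
  have himg : digitSet (Sd μ M) q = φ '' C := by
    ext x; constructor
    · rintro ⟨s, hs, hsum⟩
      refine ⟨fun n => ⟨s n, digit_lt_succ _ (hs n)⟩, fun n => hs n, hsum.tsum_eq⟩
    · rintro ⟨s, hsC, rfl⟩
      exact ⟨fun n => (s n : ℕ), hsC,
        (h.summable_of_bound (M:ℝ) (fun n => by exact_mod_cast (Fin.is_le (s n)))).hasSum⟩
  rw [himg]
  exact hCcomp.image hφ

lemma closed_E (h : Hyp μ M q) : IsClosed (digitSet (Sd μ M) q) := h.compact_E.isClosed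

/-- reflection x ↦ M t - x preserves the digit set -/
lemma refl_mem (h : Hyp μ M q) {x : ℝ} (hx : x ∈ digitSet (Sd μ M) q) :
    (M:ℝ) * tq q - x ∈ digitSet (Sd μ M) q := by
  obtain ⟨s, hs, hsum⟩ := hx
  refine ⟨fun n => M - s n, fun n => ?_, ?_⟩
  · show Sd μ M (M - s n)
    rcases hs n with h1 | ⟨h1, h2⟩ | h1
    · right; right; omega
    · right; left; constructor <;> omega
    · left; omega
  · have h1 : (fun n => ((M - s n : ℕ) : ℝ) * q ^ (n+1))
        = fun n => (M:ℝ) * q^(n+1) - (s n : ℝ) * q^(n+1) := by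
      funext n
      have : ((M - s n : ℕ) : ℝ) = (M:ℝ) - s n := by
        have := digit_le_nat (hs n)
        push_cast [Nat.cast_sub this]
        ring
      rw [this]; ring
    rw [h1]
    exact (h.hasSum_geom.mul_left (M:ℝ)).sub hsum

/-- the reflection preserves trivial components -/
lemma refl_trivial (h : Hyp μ M q) {z : ℝ} (hz : z ∈ digitSet (Sd μ M) q)
    (htr : connectedComponentIn (digitSet (Sd μ M) q) z = {z}) :
    connectedComponentIn (digitSet (Sd μ M) q) ((M:ℝ) * tq q - z) = {(M:ℝ) * tq q - z} := by
  set E := digitSet (Sd μ M) q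
  set ρ : ℝ → ℝ := fun x => (M:ℝ) * tq q - x with hρ
  have hz' : (M:ℝ) * tq q - z ∈ E := h.refl_mem hz
  have hC := isPreconnected_connectedComponentIn (x := (M:ℝ) * tq q - z) (F := E)
  have himg : IsPreconnected (ρ '' connectedComponentIn E ((M:ℝ) * tq q - z)) :=
    hC.image ρ (Continuous.continuousOn (by continuity))
  have hsub : ρ '' connectedComponentIn E ((M:ℝ) * tq q - z) ⊆ E := by
    rintro _ ⟨w, hw, rfl⟩
    exact h.refl_mem (connectedComponentIn_subset E _ hw)
  have hzin : z ∈ ρ '' connectedComponentIn E ((M:ℝ) * tq q - z) := by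
    refine ⟨(M:ℝ) * tq q - z, mem_connectedComponentIn hz', by simp [hρ]⟩
  have h2 := himg.subset_connectedComponentIn hzin hsub
  rw [htr] at h2
  apply Subset.antisymm
  · intro w hw
    have : ρ w ∈ ({z} : Set ℝ) := h2 ⟨w, hw, rfl⟩
    simp only [mem_singleton_iff, hρ] at this ⊢
    linarith
  · intro w hw
    simp only [mem_singleton_iff] at hw
    subst hw
    exact mem_connectedComponentIn hz'

lemma mem_q (h : Hyp μ M q) {z : ℝ} (hz : z ∈ digitSet (Sd μ M) q) :
    q * z ∈ digitSet (Sd μ M) q := by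
  have := h.mem_step (c := 0) (Or.inl rfl) hz
  simpa using this

lemma mem_Mq (h : Hyp μ M q) {z : ℝ} (hz : z ∈ digitSet (Sd μ M) q) :
    (M:ℝ) * q + q * z ∈ digitSet (Sd μ M) q :=
  h.mem_step (c := M) (Or.inr (Or.inr rfl)) hz

lemma mem_μq (h : Hyp μ M q) {z : ℝ} (hz : z ∈ digitSet (Sd μ M) q) :
    (μ:ℝ) * q + q * z ∈ digitSet (Sd μ M) q := by
  refine h.mem_step (c := μ) ?_ hz
  right; left; exact ⟨le_refl _, by have := h.h2μ; omega⟩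

lemma gap_scaled (h : Hyp μ M q) : ∀ n, ∀ x ∈ digitSet (Sd μ M) q,
    ¬((M * tq q * q) * q^n < x ∧ x < ((μ:ℝ) * q) * q^n) := by
  intro n
  induction n with
  | zero =>
    intro x hx hgap
    simp only [pow_zero, mul_one] at hgap
    exact h.gap_low hx hgap
  | succ n ih =>
    rintro x hx ⟨h1, h2⟩
    have hpow : q ^ (n+1) ≤ 1 := pow_le_one₀ h.hq.le h.hq1.le
    have hxlt : x < (μ:ℝ) * q := by
      have hμq : (0:ℝ) ≤ (μ:ℝ) * q := mul_nonneg (Nat.cast_nonneg μ) h.hq.le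
      calc x < ((μ:ℝ) * q) * q^(n+1) := h2
      _ ≤ ((μ:ℝ) * q) * 1 := by nlinarith
      _ = (μ:ℝ) * q := by ring
    obtain ⟨y, hy, rfl⟩ := h.ex0 hx hxlt
    refine ih y hy ⟨?_, ?_⟩
    · have := h.hq
      rw [pow_succ] at h1
      nlinarith
    · have := h.hq
      rw [pow_succ] at h2
      nlinarith

lemma comp_zero (h : Hyp μ M q) :
    connectedComponentIn (digitSet (Sd μ M) q) 0 = {0} := by
  set E := digitSet (Sd μ M) q with hE
  have h0 : (0:ℝ) ∈ E := h.zero_mem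
  apply Subset.antisymm
  · intro w hw
    have hw0 : 0 ≤ w := h.mem_nonneg (connectedComponentIn_subset E 0 hw)
    have hwn : ∀ n : ℕ, w ≤ (M * tq q * q) * q^n := by
      intro n
      have hab : (M * tq q * q) * q^n < ((μ:ℝ) * q) * q^n := by
        nlinarith [mul_lt_mul_of_pos_right (mul_lt_mul_of_pos_right h.hMt h.hq) (h.hqpow n)]
      have := comp_subset_Iic (fun x hx => h.gap_scaled n x hx) hab h0
        (mul_nonneg (mul_nonneg (mul_nonneg (Nat.cast_nonneg M) h.ht_pos.le) h.hq.le) (h.hqpow n).le)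
      exact this hw
    have hto : Tendsto (fun n : ℕ => (M * tq q * q) * q^n) atTop (𝓝 0) := by
      rw [show (0:ℝ) = (M * tq q * q) * 0 by ring]
      exact (tendsto_pow_atTop_nhds_zero_of_lt_one h.hq.le h.hq1).const_mul _
    have : w ≤ 0 := ge_of_tendsto hto (Filter.Eventually.of_forall hwn)
    simp [le_antisymm this hw0]
  · intro w hw
    simp only [mem_singleton_iff] at hw
    subst hw
    exact mem_connectedComponentIn h0

lemma trivial_q (h : Hyp μ M q) {z : ℝ} (hz : z ∈ digitSet (Sd μ M) q)
    (htr : connectedComponentIn (digitSet (Sd μ M) q) z = {z}) :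
    connectedComponentIn (digitSet (Sd μ M) q) (q * z) = {q * z} := by
  set E := digitSet (Sd μ M) q with hE
  have hx : q * z ∈ E := h.mem_q hz
  have hz0 := h.mem_nonneg hz
  have hz1 := h.mem_le hz
  have hsub : connectedComponentIn E (q * z) ⊆ Iic (M * tq q * q) := by
    apply comp_subset_Iic (b := (μ:ℝ) * q) (fun x hx => h.gap_low hx) ?_ hx ?_
    · nlinarith [h.hMt, h.hq]
    · nlinarith [h.hq]
  have himg : IsPreconnected ((fun w => w / q) '' connectedComponentIn E (q * z)) :=
    (isPreconnected_connectedComponentIn).image _ (Continuous.continuousOn (by continuity))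
  have himgE : (fun w => w / q) '' connectedComponentIn E (q * z) ⊆ E := by
    rintro _ ⟨w, hw, rfl⟩
    have hwE := connectedComponentIn_subset E (q*z) hw
    have hwlt : w < (μ:ℝ) * q := by
      have := hsub hw
      rw [mem_Iic] at this
      nlinarith [h.hMt, h.hq]
    obtain ⟨y, hy, rfl⟩ := h.ex0 hwE hwlt
    simpa [ne_of_gt h.hq] using hy
  have hzin : z ∈ (fun w => w / q) '' connectedComponentIn E (q * z) :=
    ⟨q * z, mem_connectedComponentIn hx, by field_simp [h.hq.ne']⟩
  have h2 := himg.subset_connectedComponentIn hzin himgE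
  rw [htr] at h2
  apply Subset.antisymm
  · intro w hw
    have h3 : w / q ∈ ({z} : Set ℝ) := h2 ⟨w, hw, rfl⟩
    rw [mem_singleton_iff] at h3
    have h4 : w = q * z := by
      field_simp [h.hq.ne'] at h3
      linarith
    rw [h4]
    exact mem_singleton _
  · intro w hw
    simp only [mem_singleton_iff] at hw
    subst hw
    exact mem_connectedComponentIn hx

lemma trivial_Mq (h : Hyp μ M q) {z : ℝ} (hz : z ∈ digitSet (Sd μ M) q)
    (htr : connectedComponentIn (digitSet (Sd μ M) q) z = {z}) :
    connectedComponentIn (digitSet (Sd μ M) q) ((M:ℝ)*q + q*z) = {(M:ℝ)*q + q*z} := by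
  set E := digitSet (Sd μ M) q with hE
  have hx : (M:ℝ)*q + q*z ∈ E := h.mem_Mq hz
  have hz0 := h.mem_nonneg hz
  have hsub : connectedComponentIn E ((M:ℝ)*q + q*z) ⊆ Ici ((M:ℝ)*q) := by
    apply comp_subset_Ici (a := ((M:ℝ) - μ) * q + M * tq q * q) (fun x hx => h.gap_high hx) ?_ hx ?_
    · nlinarith [h.hMt, h.hq]
    · nlinarith [h.hq]
  have himg : IsPreconnected ((fun w => (w - (M:ℝ)*q) / q) '' connectedComponentIn E ((M:ℝ)*q + q*z)) :=
    (isPreconnected_connectedComponentIn).image _ (Continuous.continuousOn (by continuity))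
  have himgE : (fun w => (w - (M:ℝ)*q) / q) '' connectedComponentIn E ((M:ℝ)*q + q*z) ⊆ E := by
    rintro _ ⟨w, hw, rfl⟩
    have hwE := connectedComponentIn_subset E _ hw
    have hwge : (M:ℝ) * q ≤ w := hsub hw
    obtain ⟨y, hy, rfl⟩ := h.exM hwE hwge
    show ((M:ℝ)*q + q*y - (M:ℝ)*q) / q ∈ E
    have h4 : ((M:ℝ)*q + q*y - (M:ℝ)*q) / q = y := by field_simp [h.hq.ne']; ring
    rw [h4]; exact hy
  have hzin : z ∈ (fun w => (w - (M:ℝ)*q) / q) '' connectedComponentIn E ((M:ℝ)*q + q*z) :=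
    ⟨(M:ℝ)*q + q*z, mem_connectedComponentIn hx, by field_simp [h.hq.ne']; ring⟩
  have h2 := himg.subset_connectedComponentIn hzin himgE
  rw [htr] at h2
  apply Subset.antisymm
  · intro w hw
    have h3 : (w - (M:ℝ)*q) / q ∈ ({z} : Set ℝ) := h2 ⟨w, hw, rfl⟩
    rw [mem_singleton_iff] at h3
    have h4 : w = (M:ℝ)*q + q * z := by
      field_simp [h.hq.ne'] at h3
      linarith
    rw [h4]
    exact mem_singleton _
  · intro w hw
    simp only [mem_singleton_iff] at hw
    subst hw
    exact mem_connectedComponentIn hx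

lemma trivial_μq (h : Hyp μ M q) {z : ℝ} (hz : z ∈ digitSet (Sd μ M) q)
    (hz1 : z < 1)
    (htr : connectedComponentIn (digitSet (Sd μ M) q) z = {z}) :
    connectedComponentIn (digitSet (Sd μ M) q) ((μ:ℝ)*q + q*z) = {(μ:ℝ)*q + q*z} := by
  set E := digitSet (Sd μ M) q with hE
  have hx : (μ:ℝ)*q + q*z ∈ E := h.mem_μq hz
  have hz0 := h.mem_nonneg hz
  have hlow : connectedComponentIn E ((μ:ℝ)*q + q*z) ⊆ Ici ((μ:ℝ)*q) := by
    apply comp_subset_Ici (a := M * tq q * q) (fun x hx => h.gap_low hx) ?_ hx ?_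
    · nlinarith [h.hMt, h.hq]
    · nlinarith [h.hq]
  have hupp : ∀ w ∈ connectedComponentIn E ((μ:ℝ)*q + q*z), w < ((μ:ℝ)+1) * q := by
    by_contra hcon
    push_neg at hcon
    obtain ⟨w, hw, hwge⟩ := hcon
    have hord := (isPreconnected_connectedComponentIn
      (x := (μ:ℝ)*q + q*z) (F := E)).ordConnected
    have hxC := mem_connectedComponentIn hx
    have hIcoE : Ico z 1 ⊆ E := by
      intro θ ⟨hθ1, hθ2⟩
      have hy : (μ:ℝ)*q + q*θ ∈ Icc ((μ:ℝ)*q + q*z) w := by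
        constructor
        · nlinarith [h.hq]
        · nlinarith [h.hq]
      have hyC := hord.out hxC hw hy
      have hyE := connectedComponentIn_subset E _ hyC
      have hge : (μ:ℝ) * q ≤ (μ:ℝ)*q + q*θ := by nlinarith [h.hq]
      have hlt : (μ:ℝ)*q + q*θ < ((μ:ℝ)+1) * q := by nlinarith [h.hq]
      obtain ⟨y, hy', heq⟩ := h.exμ hyE hge hlt
      have h5 : q * y = q * θ := by linarith [heq]
      have h6 : y = θ := mul_left_cancel₀ h.hq.ne' h5
      rw [← h6]; exact hy'
    have hIcoC : Ico z 1 ⊆ connectedComponentIn E z := by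
      apply IsPreconnected.subset_connectedComponentIn isPreconnected_Ico
        ⟨le_refl z, hz1⟩ hIcoE
    rw [htr] at hIcoC
    have : (z + 1)/2 ∈ ({z} : Set ℝ) := hIcoC ⟨by linarith, by linarith⟩
    simp only [mem_singleton_iff] at this
    linarith
  have himg : IsPreconnected ((fun w => (w - (μ:ℝ)*q) / q) '' connectedComponentIn E ((μ:ℝ)*q + q*z)) :=
    (isPreconnected_connectedComponentIn).image _ (Continuous.continuousOn (by continuity))
  have himgE : (fun w => (w - (μ:ℝ)*q) / q) '' connectedComponentIn E ((μ:ℝ)*q + q*z) ⊆ E := by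
    rintro _ ⟨w, hw, rfl⟩
    have hwE := connectedComponentIn_subset E _ hw
    have hwge : (μ:ℝ) * q ≤ w := hlow hw
    obtain ⟨y, hy, rfl⟩ := h.exμ hwE hwge (hupp _ hw)
    show ((μ:ℝ)*q + q*y - (μ:ℝ)*q) / q ∈ E
    have h4 : ((μ:ℝ)*q + q*y - (μ:ℝ)*q) / q = y := by field_simp [h.hq.ne']; ring
    rw [h4]; exact hy
  have hzin : z ∈ (fun w => (w - (μ:ℝ)*q) / q) '' connectedComponentIn E ((μ:ℝ)*q + q*z) :=
    ⟨(μ:ℝ)*q + q*z, mem_connectedComponentIn hx, by field_simp [h.hq.ne']; ring⟩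
  have h2 := himg.subset_connectedComponentIn hzin himgE
  rw [htr] at h2
  apply Subset.antisymm
  · intro w hw
    have h3 : (w - (μ:ℝ)*q) / q ∈ ({z} : Set ℝ) := h2 ⟨w, hw, rfl⟩
    rw [mem_singleton_iff] at h3
    have h4 : w = (μ:ℝ)*q + q * z := by
      field_simp [h.hq.ne'] at h3
      linarith
    rw [h4]
    exact mem_singleton _
  · intro w hw
    simp only [mem_singleton_iff] at hw
    subst hw
    exact mem_connectedComponentIn hx

/-- `t = q + q t` -/
lemma t_eq_q_add (h : Hyp μ M q) : tq q = q + q * tq q := by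
  have h1 := h.ht_eq
  nlinarith

lemma hμ1q (h : Hyp μ M q) : ((μ:ℝ)+1) * q < 1 := by
  have h1 : (M:ℝ)*q + (μ:ℝ)*q < μ := by nlinarith [h.hgap]
  have h2 : (μ:ℝ)*((μ:ℝ)+1) ≤ (M:ℝ) + μ := by
    have h3 : ((μ:ℝ))^2 ≤ M := by exact_mod_cast h.hμ2
    nlinarith
  nlinarith [h.hq, h.hμR]

lemma hμt_lt (h : Hyp μ M q) : (μ:ℝ) * tq q < ((μ:ℝ)+1)*q := by
  have h1 : (μ:ℝ) * tq q = (μ:ℝ)*q + q * ((μ:ℝ) * tq q) := by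
    have := h.t_eq_q_add; nlinarith
  nlinarith [h.hμt1, h.hq]

end Hyp

noncomputable def zfin (μ : ℕ) (q : ℝ) : ℕ → ℝ
  | 0 => 0
  | (N+1) => (μ:ℝ)*q + q * zfin μ q N

namespace Hyp

variable {μ M : ℕ} {q : ℝ}

lemma zfin_mem (h : Hyp μ M q) : ∀ N, zfin μ q N ∈ digitSet (Sd μ M) q
  | 0 => h.zero_mem
  | (N+1) => h.mem_μq (h.zfin_mem N)

lemma zfin_diff (h : Hyp μ M q) : ∀ N, (μ:ℝ) * tq q - zfin μ q N = (μ:ℝ) * tq q * q^N := by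
  intro N
  induction N with
  | zero => simp [zfin]
  | succ N ih =>
    have h1 : (μ:ℝ) * tq q = (μ:ℝ)*q + q * ((μ:ℝ) * tq q) := by
      have := h.t_eq_q_add; nlinarith
    rw [zfin]
    rw [pow_succ]
    have ih' : ((μ:ℝ) * tq q - zfin μ q N) * q = (μ:ℝ) * tq q * q ^ N * q := by rw [ih]
    nlinarith [ih']

lemma zfin_lt (h : Hyp μ M q) (N : ℕ) : zfin μ q N < (μ:ℝ) * tq q := by
  have h1 := h.zfin_diff N
  have h2 : (0:ℝ) < (μ:ℝ) * tq q * q^N :=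
    mul_pos (mul_pos (lt_of_lt_of_le zero_lt_one h.hμR) h.ht_pos) (h.hqpow N)
  linarith

lemma zfin_lt1 (h : Hyp μ M q) (N : ℕ) : zfin μ q N < 1 :=
  lt_trans (h.zfin_lt N) h.hμt1

lemma zfin_trivial (h : Hyp μ M q) : ∀ N,
    connectedComponentIn (digitSet (Sd μ M) q) (zfin μ q N) = {zfin μ q N}
  | 0 => h.comp_zero
  | (N+1) => h.trivial_μq (h.zfin_mem N) (h.zfin_lt1 N) (h.zfin_trivial N)

/-- iterated decomposition with prefix closure property -/
lemma decompN (h : Hyp μ M q) : ∀ N : ℕ, ∀ x ∈ digitSet (Sd μ M) q,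
    ∃ p y : ℝ, y ∈ digitSet (Sd μ M) q ∧ x = p + q^N * y ∧
      ∀ z ∈ digitSet (Sd μ M) q, p + q^N * z ∈ digitSet (Sd μ M) q := by
  intro N
  induction N with
  | zero =>
    intro x hx
    exact ⟨0, x, hx, by ring, fun z hz => by simpa using hz⟩
  | succ N ih =>
    intro x hx
    obtain ⟨c, hc, x', hx', rfl⟩ := h.mem_decomp hx
    obtain ⟨p', y, hy, heq, hcl⟩ := ih x' hx'
    refine ⟨(c:ℝ)*q + q*p', y, hy, ?_, ?_⟩
    · rw [heq]; ring
    · intro z hz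
      have h1 := h.mem_step hc (hcl z hz)
      have h2 : (c:ℝ)*q + q * (p' + q^N * z) = (c:ℝ)*q + q*p' + q^(N+1) * z := by ring
      rw [← h2]; exact h1

lemma pow_small (h : Hyp μ M q) {ε : ℝ} (hε : 0 < ε) (c : ℝ) :
    ∃ N : ℕ, c * q^N < ε := by
  have hto : Tendsto (fun n : ℕ => c * q^n) atTop (𝓝 0) := by
    rw [show (0:ℝ) = c * 0 by ring]
    exact (tendsto_pow_atTop_nhds_zero_of_lt_one h.hq.le h.hq1).const_mul _
  exact (hto.eventually (gt_mem_nhds hε)).exists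

lemma closure_interior (h : Hyp μ M q) :
    digitSet (Sd μ M) q = closure (interior (digitSet (Sd μ M) q)) := by
  set E := digitSet (Sd μ M) q with hE
  apply Subset.antisymm
  · intro x hx
    rw [Metric.mem_closure_iff]
    intro ε hε
    obtain ⟨N, hN⟩ := h.pow_small hε ((M:ℝ)*tq q)
    obtain ⟨p, y, hyE, hxeq, hcl⟩ := h.decompN N x hx
    have hμlt : (μ:ℝ) * tq q < ((M:ℝ)-μ) * tq q := by
      have h1 : (μ:ℝ) < (M:ℝ)-μ := by
        have := h.h2μ
        have : (2*μ:ℕ) < M := this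
        have h2 : ((2*μ:ℕ):ℝ) < M := by exact_mod_cast this
        push_cast at h2
        linarith
      nlinarith [h.ht_pos]
    set c0 := (((M:ℝ))/2) * tq q with hc0
    have hc0mem : c0 ∈ Ioo ((μ:ℝ)*tq q) (((M:ℝ)-μ)*tq q) := by
      constructor
      · rw [hc0]
        have h1 : (μ:ℝ) < (M:ℝ)/2 := by
          have := h.h2μ
          have h2 : ((2*μ:ℕ):ℝ) < M := by exact_mod_cast this
          push_cast at h2
          linarith
        nlinarith [h.ht_pos]
      · rw [hc0]
        have h1 : (M:ℝ)/2 < (M:ℝ)-μ := by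
          have h2 : ((2*μ:ℕ):ℝ) < M := by exact_mod_cast h.h2μ
          push_cast at h2
          linarith
        nlinarith [h.ht_pos]
    have hioo : Ioo (p + q^N*((μ:ℝ)*tq q)) (p + q^N*(((M:ℝ)-μ)*tq q)) ⊆ E := by
      intro w hw
      obtain ⟨hw1, hw2⟩ := hw
      have hqN := h.hqpow N
      have hmem : (w - p)/q^N ∈ Icc ((μ:ℝ)*tq q) (((M:ℝ)-μ)*tq q) := by
        constructor
        · rw [le_div_iff₀ hqN]; nlinarith
        · rw [div_le_iff₀ hqN]; nlinarith
      have h1 := h.interval_subset hmem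
      have h2 := hcl _ h1
      have h3 : p + q^N * ((w - p)/q^N) = w := by field_simp; ring
      rw [h3] at h2
      exact h2
    have hbint : p + q^N * c0 ∈ interior E := by
      apply interior_maximal hioo isOpen_Ioo
      constructor
      · have hqN := h.hqpow N
        nlinarith [hc0mem.1]
      · have hqN := h.hqpow N
        nlinarith [hc0mem.2]
    refine ⟨p + q^N * c0, hbint, ?_⟩
    rw [hxeq]
    rw [Real.dist_eq]
    have h1 : |p + q ^ N * y - (p + q ^ N * c0)| = q^N * |y - c0| := by
      rw [show p + q ^ N * y - (p + q ^ N * c0) = q^N * (y - c0) by ring,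
        abs_mul, abs_of_pos (h.hqpow N)]
    rw [h1]
    have hy0 := h.mem_nonneg hyE
    have hy1 := h.mem_le hyE
    have hc00 : 0 ≤ c0 ∧ c0 ≤ (M:ℝ) * tq q := by
      constructor
      · rw [hc0]; nlinarith [h.ht_pos, h.hMpos]
      · rw [hc0]; nlinarith [h.ht_pos, h.hMpos]
    have h2 : |y - c0| ≤ (M:ℝ) * tq q := by
      rw [abs_le]; constructor <;> nlinarith [hc00.1, hc00.2]
    calc q^N * |y - c0| ≤ q^N * ((M:ℝ) * tq q) :=
          mul_le_mul_of_nonneg_left h2 (h.hqpow N).le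
    _ = (M:ℝ) * tq q * q^N := by ring
    _ < ε := hN
  · exact (IsClosed.closure_subset_iff h.closed_E).mpr interior_subset

/-- digit-prepending preserves interiority -/
lemma int_step (h : Hyp μ M q) {c : ℕ} (hc : Sd μ M c) {e : ℝ}
    (he : e ∈ interior (digitSet (Sd μ M) q)) :
    (c:ℝ)*q + q*e ∈ interior (digitSet (Sd μ M) q) := by
  rw [mem_interior_iff_mem_nhds, Metric.mem_nhds_iff] at he ⊢
  obtain ⟨δ, hδ, hball⟩ := he
  refine ⟨q*δ, by nlinarith [h.hq], ?_⟩
  intro w hw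
  rw [Metric.mem_ball, Real.dist_eq] at hw
  have h1 : |(w - (c:ℝ)*q)/q - e| < δ := by
    rw [show (w - (c:ℝ)*q)/q - e = (w - ((c:ℝ)*q + q*e))/q by field_simp [h.hq.ne']; ring]
    rw [abs_div, abs_of_pos h.hq, div_lt_iff₀ h.hq]
    nlinarith
  have h2 : (w - (c:ℝ)*q)/q ∈ digitSet (Sd μ M) q := by
    apply hball
    rw [Metric.mem_ball, Real.dist_eq]
    exact h1
  have h3 := h.mem_step hc h2
  have h4 : (c:ℝ)*q + q*((w - (c:ℝ)*q)/q) = w := by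
    rw [mul_div_cancel₀ _ h.hq.ne']
    ring
  rw [h4] at h3
  exact h3

lemma notint_refl (h : Hyp μ M q) {e : ℝ}
    (he : e ∉ interior (digitSet (Sd μ M) q)) :
    (M:ℝ)*tq q - e ∉ interior (digitSet (Sd μ M) q) := by
  intro hcon
  apply he
  rw [mem_interior_iff_mem_nhds, Metric.mem_nhds_iff] at hcon ⊢
  obtain ⟨δ, hδ, hball⟩ := hcon
  refine ⟨δ, hδ, ?_⟩
  intro w hw
  rw [Metric.mem_ball, Real.dist_eq] at hw
  have h1 : (M:ℝ)*tq q - w ∈ digitSet (Sd μ M) q := by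
    apply hball
    rw [Metric.mem_ball, Real.dist_eq]
    rw [show (M:ℝ)*tq q - w - ((M:ℝ)*tq q - e) = -(w - e) by ring, abs_neg]
    exact hw
  have h2 := h.refl_mem h1
  rw [show (M:ℝ)*tq q - ((M:ℝ)*tq q - w) = w by ring] at h2
  exact h2

/-- the approximation statement, parameterized by scale -/
def Claim (μ M : ℕ) (q : ℝ) (n : ℕ) : Prop :=
  ∀ e ∈ digitSet (Sd μ M) q, e ∉ interior (digitSet (Sd μ M) q) →
    ∃ z ∈ digitSet (Sd μ M) q,
      connectedComponentIn (digitSet (Sd μ M) q) z = {z} ∧ z ≠ e ∧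
      |z - e| ≤ 2*(M:ℝ)*tq q*q^n ∧ (e < (μ:ℝ)*tq q → z < 1)

lemma low_case (h : Hyp μ M q) (n : ℕ) (IH : Claim μ M q n) :
    ∀ e ∈ digitSet (Sd μ M) q, e ∉ interior (digitSet (Sd μ M) q) →
    e < (μ:ℝ) * tq q →
    ∃ z ∈ digitSet (Sd μ M) q,
      connectedComponentIn (digitSet (Sd μ M) q) z = {z} ∧ z ≠ e ∧
      |z - e| ≤ 2*(M:ℝ)*tq q*q^(n+1) ∧ z < 1 := by
  intro e heE hni hlow
  by_cases hcase : e < (μ:ℝ) * q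
  · obtain ⟨e', he', rfl⟩ := h.ex0 heE hcase
    have hni' : e' ∉ interior (digitSet (Sd μ M) q) := by
      intro hcon
      apply hni
      have := h.int_step (c := 0) (Or.inl rfl) hcon
      simpa using this
    obtain ⟨z', hz'E, hz'tr, hz'ne, hz'd, _⟩ := IH e' he' hni'
    refine ⟨q * z', h.mem_q hz'E, h.trivial_q hz'E hz'tr, ?_, ?_, ?_⟩
    · intro hcon
      exact hz'ne (mul_left_cancel₀ h.hq.ne' hcon)
    · rw [show q*z' - q*e' = q*(z' - e') by ring, abs_mul, abs_of_pos h.hq]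
      calc q * |z' - e'| ≤ q * (2*(M:ℝ)*tq q*q^n) :=
        mul_le_mul_of_nonneg_left hz'd h.hq.le
      _ = 2*(M:ℝ)*tq q*q^(n+1) := by ring
    · have h1 := h.mem_le hz'E
      have h2 : q * z' ≤ q * ((M:ℝ) * tq q) := mul_le_mul_of_nonneg_left h1 h.hq.le
      have h3 : q * ((M:ℝ)*tq q) < q * μ := by nlinarith [h.hq, h.hMt]
      have h4 : q * (μ:ℝ) ≤ (μ:ℝ) * tq q := by nlinarith [h.htq, h.hμR]
      linarith [h.hμt1]
  · push_neg at hcase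
    have hlt : e < ((μ:ℝ)+1)*q := lt_trans hlow h.hμt_lt
    obtain ⟨e', he', rfl⟩ := h.exμ heE hcase hlt
    have hμteq : (μ:ℝ) * tq q = (μ:ℝ)*q + q * ((μ:ℝ) * tq q) := by
      have := h.t_eq_q_add; nlinarith
    have he'lt : e' < (μ:ℝ) * tq q := by
      have h1 : q * e' < q * ((μ:ℝ) * tq q) := by linarith [hlow, hμteq]
      exact lt_of_mul_lt_mul_left h1 h.hq.le
    have hni' : e' ∉ interior (digitSet (Sd μ M) q) := by
      intro hcon
      apply hni
      exact h.int_step (c := μ) (Or.inr (Or.inl ⟨le_refl _, by have := h.h2μ; omega⟩)) hcon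
    obtain ⟨z', hz'E, hz'tr, hz'ne, hz'd, hz'cond⟩ := IH e' he' hni'
    have hz'1 : z' < 1 := hz'cond he'lt
    refine ⟨(μ:ℝ)*q + q * z', h.mem_μq hz'E, h.trivial_μq hz'E hz'1 hz'tr, ?_, ?_, ?_⟩
    · intro hcon
      have : q * z' = q * e' := by linarith
      exact hz'ne (mul_left_cancel₀ h.hq.ne' this)
    · rw [show (μ:ℝ)*q + q*z' - ((μ:ℝ)*q + q*e') = q*(z' - e') by ring,
        abs_mul, abs_of_pos h.hq]
      calc q * |z' - e'| ≤ q * (2*(M:ℝ)*tq q*q^n) :=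
        mul_le_mul_of_nonneg_left hz'd h.hq.le
      _ = 2*(M:ℝ)*tq q*q^(n+1) := by ring
    · have h1 : (μ:ℝ)*q + q*z' < (μ:ℝ)*q + q*1 := by nlinarith [h.hq]
      have h2 := h.hμ1q
      nlinarith

lemma claim (h : Hyp μ M q) : ∀ n : ℕ, Claim μ M q n := by
  intro n
  induction n with
  | zero =>
    intro e heE _
    have he0 := h.mem_nonneg heE
    have he1 := h.mem_le heE
    have hMt0 : 0 < (M:ℝ) * tq q := mul_pos h.hMpos h.ht_pos
    by_cases hcase : e = 0
    · subst hcase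
      have htop : connectedComponentIn (digitSet (Sd μ M) q) ((M:ℝ)*tq q) = {(M:ℝ)*tq q} := by
        have := h.refl_trivial h.zero_mem h.comp_zero
        simpa using this
      refine ⟨q * ((M:ℝ)*tq q), h.mem_q h.top_mem, h.trivial_q h.top_mem htop, ?_, ?_, ?_⟩
      · intro hcon
        nlinarith [h.hq]
      · rw [sub_zero, abs_of_pos (by nlinarith [h.hq])]
        simp only [pow_zero, mul_one]
        nlinarith [h.hq1]
      · intro _
        nlinarith [h.hq, h.hMt, h.hμt1, h.hμR, h.htq]
    · refine ⟨0, h.zero_mem, h.comp_zero, Ne.symm hcase, ?_, fun _ => zero_lt_one⟩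
      rw [zero_sub, abs_neg, abs_of_nonneg he0]
      simp only [pow_zero, mul_one]
      linarith
  | succ n IH =>
    intro e heE hni
    have hMμt : ((μ:ℝ)) * tq q < ((M:ℝ)-μ) * tq q := by
      have h2 : ((2*μ:ℕ):ℝ) < M := by exact_mod_cast h.h2μ
      push_cast at h2
      nlinarith [h.ht_pos]
    rcases lt_trichotomy e ((μ:ℝ) * tq q) with hlow | heq | hhigh
    · obtain ⟨z, hzE, hztr, hzne, hzd, hz1⟩ := h.low_case n IH e heE hni hlow
      exact ⟨z, hzE, hztr, hzne, hzd, fun _ => hz1⟩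
    · subst heq
      refine ⟨zfin μ q (n+2), h.zfin_mem _, h.zfin_trivial _, ne_of_lt (h.zfin_lt _), ?_,
        fun _ => h.zfin_lt1 _⟩
      have h1 := h.zfin_diff (n+2)
      rw [show zfin μ q (n+2) - (μ:ℝ)*tq q = -((μ:ℝ)*tq q - zfin μ q (n+2)) by ring, abs_neg,
        h1, abs_of_nonneg (mul_nonneg (mul_nonneg (Nat.cast_nonneg μ) h.ht_pos.le) (h.hqpow (n+2)).le)]
      rw [show ((n:ℕ)+2) = (n+1)+1 by ring, pow_succ]
      have hq1 := h.hq1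
      have hqn := h.hqpow (n+1)
      have hμM := h.hμM
      have ht0 := h.ht_pos
      have htqn : (0:ℝ) ≤ tq q * q^(n+1) := mul_nonneg ht0.le hqn.le
      have h5 : (μ:ℝ)*q ≤ (M:ℝ) := by nlinarith [h.hq, Nat.cast_nonneg (α := ℝ) μ]
      have h6 := mul_le_mul_of_nonneg_right h5 htqn
      have h4 : (0:ℝ) ≤ (M:ℝ)*tq q*q^(n+1) :=
        mul_nonneg (mul_nonneg (Nat.cast_nonneg M) ht0.le) hqn.le
      nlinarith [h6]
    · rcases lt_trichotomy e (((M:ℝ)-μ) * tq q) with hlow2 | heq2 | hhigh2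
      · exfalso
        apply hni
        apply interior_maximal (fun w hw => h.interval_subset (Ioo_subset_Icc_self hw)) isOpen_Ioo
        exact ⟨hhigh, hlow2⟩
      · subst heq2
        have hrefl : (M:ℝ)*tq q - zfin μ q (n+2) ∈ digitSet (Sd μ M) q :=
          h.refl_mem (h.zfin_mem _)
        refine ⟨(M:ℝ)*tq q - zfin μ q (n+2), hrefl,
          h.refl_trivial (h.zfin_mem _) (h.zfin_trivial _), ?_, ?_, ?_⟩
        · have h1 := h.zfin_lt (n+2)
          intro hcon
          have : zfin μ q (n+2) = (μ:ℝ) * tq q := by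
            have hMM : (M:ℝ)*tq q - ((M:ℝ)-μ)*tq q = (μ:ℝ)*tq q := by ring
            linarith [hcon, hMM]
          linarith
        · have h1 := h.zfin_diff (n+2)
          rw [show (M:ℝ)*tq q - zfin μ q (n+2) - ((M:ℝ)-μ)*tq q
            = (μ:ℝ)*tq q - zfin μ q (n+2) by ring, h1,
            abs_of_nonneg (mul_nonneg (mul_nonneg (Nat.cast_nonneg μ) h.ht_pos.le) (h.hqpow (n+2)).le)]
          rw [show ((n:ℕ)+2) = (n+1)+1 by ring, pow_succ]
          have hqn := h.hqpow (n+1)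
          have ht0 := h.ht_pos
          have htqn : (0:ℝ) ≤ tq q * q^(n+1) := mul_nonneg ht0.le hqn.le
          have h5 : (μ:ℝ)*q ≤ (M:ℝ) := by
            nlinarith [h.hq, h.hq1, h.hμM, Nat.cast_nonneg (α := ℝ) μ]
          have h6 := mul_le_mul_of_nonneg_right h5 htqn
          have h4 : (0:ℝ) ≤ (M:ℝ)*tq q*q^(n+1) :=
            mul_nonneg (mul_nonneg (Nat.cast_nonneg M) ht0.le) hqn.le
          nlinarith [h6]
        · intro hcon
          linarith
      · set e' := (M:ℝ)*tq q - e with he'def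
        have he'E : e' ∈ digitSet (Sd μ M) q := h.refl_mem heE
        have he'ni : e' ∉ interior (digitSet (Sd μ M) q) := h.notint_refl hni
        have he'low : e' < (μ:ℝ) * tq q := by
          rw [he'def]
          have : (M:ℝ)*tq q - ((M:ℝ)-μ)*tq q = (μ:ℝ)*tq q := by ring
          linarith
        obtain ⟨z', hz'E, hz'tr, hz'ne, hz'd, _⟩ := h.low_case n IH e' he'E he'ni he'low
        refine ⟨(M:ℝ)*tq q - z', h.refl_mem hz'E, h.refl_trivial hz'E hz'tr, ?_, ?_, ?_⟩
        · intro hcon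
          apply hz'ne
          rw [he'def]
          linarith
        · rw [show (M:ℝ)*tq q - z' - e = -(z' - e') by rw [he'def]; ring, abs_neg]
          exact hz'd
        · intro hcon
          linarith

lemma isCantorval_digitSet (h : Hyp μ M q) : IsCantorval (digitSet (Sd μ M) q) := by
  set E := digitSet (Sd μ M) q with hE
  refine ⟨⟨0, h.zero_mem⟩, h.compact_E, h.closure_interior, ?_⟩
  intro x hx _ y hy ε hε
  have hbddB : BddBelow (connectedComponentIn E x) :=
    ⟨0, fun w hw => h.mem_nonneg (connectedComponentIn_subset E x hw)⟩
  have hbddA : BddAbove (connectedComponentIn E x) :=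
    ⟨(M:ℝ)*tq q, fun w hw => h.mem_le (connectedComponentIn_subset E x hw)⟩
  have hne : (connectedComponentIn E x).Nonempty := ⟨x, mem_connectedComponentIn hx⟩
  have hclosureE : closure (connectedComponentIn E x) ⊆ E :=
    (closure_mono (connectedComponentIn_subset E x)).trans
      (subset_of_eq h.closed_E.closure_eq)
  simp only [mem_insert_iff, mem_singleton_iff] at hy
  have hyE : y ∈ E := by
    rcases hy with rfl | rfl
    · exact hclosureE (csInf_mem_closure hne hbddB)
    · exact hclosureE (csSup_mem_closure hne hbddA)
  have hyni : y ∉ interior E := by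
    intro hcon
    rw [mem_interior_iff_mem_nhds, Metric.mem_nhds_iff] at hcon
    obtain ⟨δ, hδ, hball⟩ := hcon
    rw [Real.ball_eq_Ioo] at hball
    rcases hy with rfl | rfl
    · set y := sInf (connectedComponentIn E x) with hydef
      obtain ⟨c, hc, hclt⟩ := (csInf_lt_iff hbddB hne).mp
        (show y < y + δ by linarith)
      have hcB : c ∈ Ioo (y - δ) (y + δ) := ⟨by linarith [csInf_le hbddB hc], hclt⟩
      have hpre : IsPreconnected (Ioo (y - δ) (y + δ) ∪ connectedComponentIn E x) :=
        IsPreconnected.union c hcB hc isPreconnected_Ioo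
          isPreconnected_connectedComponentIn
      have hsubE : Ioo (y - δ) (y + δ) ∪ connectedComponentIn E x ⊆ E :=
        union_subset hball (connectedComponentIn_subset E x)
      have h2 := hpre.subset_connectedComponentIn
        (Or.inr (mem_connectedComponentIn hx)) hsubE
      have h3 : y - δ/2 ∈ connectedComponentIn E x :=
        h2 (Or.inl ⟨by linarith, by linarith⟩)
      have := csInf_le hbddB h3
      rw [← hydef] at this
      linarith
    · set y := sSup (connectedComponentIn E x) with hydef
      obtain ⟨c, hc, hclt⟩ := exists_lt_of_lt_csSup hne (show y - δ < y by linarith)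
      have hcB : c ∈ Ioo (y - δ) (y + δ) := ⟨hclt, by linarith [le_csSup hbddA hc]⟩
      have hpre : IsPreconnected (Ioo (y - δ) (y + δ) ∪ connectedComponentIn E x) :=
        IsPreconnected.union c hcB hc isPreconnected_Ioo
          isPreconnected_connectedComponentIn
      have hsubE : Ioo (y - δ) (y + δ) ∪ connectedComponentIn E x ⊆ E :=
        union_subset hball (connectedComponentIn_subset E x)
      have h2 := hpre.subset_connectedComponentIn
        (Or.inr (mem_connectedComponentIn hx)) hsubE
      have h3 : y + δ/2 ∈ connectedComponentIn E x :=
        h2 (Or.inl ⟨by linarith, by linarith⟩)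
      have := le_csSup hbddA h3
      rw [← hydef] at this
      linarith
  obtain ⟨N, hN⟩ := h.pow_small hε (2*(M:ℝ)*tq q)
  obtain ⟨z, hzE, hztr, hzne, hzd, _⟩ := h.claim N y hyE hyni
  exact ⟨z, hzE, hzne, lt_of_le_of_lt hzd hN, hztr⟩

end Hyp


def Ksum (m : ℕ) : ℕ := ∑ i ∈ Finset.range (m+1), (2*m - i)

def minS (m j : ℕ) : ℕ := ∑ i ∈ Finset.range j, (m + i)
def maxS (m j : ℕ) : ℕ := ∑ i ∈ Finset.range j, (2*m - i)

lemma minS_eq (m j : ℕ) : minS m j = m * j + ∑ i ∈ Finset.range j, i := by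
  rw [minS, Finset.sum_add_distrib]
  simp [Finset.sum_const, Finset.card_range, mul_comm]

lemma maxS_add (m j : ℕ) (hj : j ≤ m + 1) :
    maxS m j + ∑ i ∈ Finset.range j, i = 2*m*j := by
  rw [maxS, ← Finset.sum_add_distrib]
  have h1 : ∀ i ∈ Finset.range j, 2*m - i + i = 2*m := by
    intro i hi
    rw [Finset.mem_range] at hi
    omega
  rw [Finset.sum_congr rfl h1]
  simp [Finset.sum_const, Finset.card_range, mul_comm]

lemma gauss (j : ℕ) : 2 * ∑ i ∈ Finset.range j, i = j * (j-1) := by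
  have := Finset.sum_range_id_mul_two j
  omega

lemma Ksum_eq_max (m : ℕ) : Ksum m = maxS m m + m := by
  rw [Ksum, Finset.sum_range_succ, maxS]
  omega

/-- choice of the cardinality -/
lemma exists_j (m : ℕ) (hm : 1 ≤ m) {c : ℕ} (h1 : m ≤ c) (h2 : c + m ≤ Ksum m) :
    ∃ j, 1 ≤ j ∧ j ≤ m ∧ minS m j ≤ c ∧ c ≤ maxS m j := by
  classical
  obtain ⟨j, hj⟩ : ∃ j, j = Nat.findGreatest (fun j => minS m j ≤ c) m := ⟨_, rfl⟩
  have hP1 : minS m 1 ≤ c := by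
    simp only [minS]
    simpa using h1
  have hj1 : 1 ≤ j := by
    rw [hj]; exact Nat.le_findGreatest (P := fun j => minS m j ≤ c) hm hP1
  have hjm : j ≤ m := by rw [hj]; exact Nat.findGreatest_le m
  have hPj : minS m j ≤ c := by
    rw [hj]; exact Nat.findGreatest_spec (P := fun j => minS m j ≤ c) (n := m) hm hP1
  refine ⟨j, hj1, hjm, hPj, ?_⟩
  by_cases hcase : j = m
  · have hKm := Ksum_eq_max m
    subst hcase
    omega
  · have hjlt : j < m := lt_of_le_of_ne hjm hcase
    have hnot : ¬ (minS m (j+1) ≤ c) := by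
      rw [hj]
      exact Nat.findGreatest_is_greatest (P := fun j => minS m j ≤ c) (n := m) (by omega) (by omega)
    push_neg at hnot
    have hkey : minS m (j+1) ≤ maxS m j + 1 := by
      obtain ⟨j', rfl⟩ : ∃ j', j = j' + 1 := ⟨j - 1, by omega⟩
      have e1 := minS_eq m (j'+1+1)
      have e2 := maxS_add m (j'+1) (by omega)
      have e3 := gauss (j'+1)
      rw [Nat.add_sub_cancel] at e3
      have e5 : ∑ i ∈ Finset.range (j'+1+1), i = (∑ i ∈ Finset.range (j'+1), i) + (j'+1) :=
        Finset.sum_range_succ _ _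
      have hprod : j' * (j' + 2) ≤ j' * m := Nat.mul_le_mul_left j' (by omega)
      zify at e1 e2 e3 e5 hprod ⊢
      nlinarith [e1, e2, e3, e5, hprod]
    omega

/-- construction of a subset of `[m, 2m]` with given sum -/
lemma exists_subset_sum (m : ℕ) (hm : 1 ≤ m) {c : ℕ} (h1 : m ≤ c) (h2 : c + m ≤ Ksum m) :
    ∃ A : Finset ℕ, (∀ a ∈ A, m ≤ a ∧ a ≤ 2*m) ∧ c = ∑ a ∈ A, a := by
  classical
  obtain ⟨j, hj1, hjm, hmin, hmax⟩ := exists_j m hm h1 h2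
  obtain ⟨e, hec⟩ : ∃ e, e + minS m j = c := ⟨c - minS m j, by omega⟩
  have hident : maxS m j = minS m j + j * (m + 1 - j) := by
    have e1 := minS_eq m j
    have e2 := maxS_add m j (by omega)
    have e3 := gauss j
    zify [show j ≤ m + 1 by omega, show 1 ≤ j by omega] at e1 e2 e3 ⊢
    linarith [e1, e2, e3]
  have hE : e ≤ j * (m + 1 - j) := by omega
  obtain ⟨d, ρ, hdm, hρj⟩ : ∃ d ρ, e = j * d + ρ ∧ ρ < j :=
    ⟨e / j, e % j, (Nat.div_add_mod e j).symm, Nat.mod_lt _ (by omega)⟩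
  have hdle : d ≤ m + 1 - j := by
    by_contra hcon
    push_neg at hcon
    have : j * (m + 2 - j) ≤ j * d := Nat.mul_le_mul_left j (by omega)
    have h6 : j * (m + 2 - j) = j * (m + 1 - j) + j := by
      have : (m + 2 - j) = (m + 1 - j) + 1 := by omega
      rw [this, Nat.mul_add, Nat.mul_one]
    omega
  have hdj : ρ ≠ 0 → d + j ≤ m := by
    intro hρ0
    rcases Nat.lt_or_ge d (m + 1 - j) with h | h
    · omega
    · have hde : d = m + 1 - j := by omega
      rw [hde] at hdm
      omega
  obtain ⟨B, hBcard, hBsum, hBmem⟩ :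
      ∃ B : Finset ℕ, B.card = j ∧ ((∑ b ∈ B, b) = (∑ i ∈ Finset.range j, i) + ρ) ∧
        (∀ b ∈ B, b + d ≤ m) := by
    by_cases hρ0 : ρ = 0
    · refine ⟨Finset.range j, Finset.card_range j, by omega, ?_⟩
      intro b hb; rw [Finset.mem_range] at hb; omega
    · have hmem : j - ρ ∈ Finset.range (j+1) := by
        rw [Finset.mem_range]; omega
      have hd2 := hdj hρ0
      refine ⟨(Finset.range (j+1)).erase (j-ρ), ?_, ?_, ?_⟩
      · rw [Finset.card_erase_of_mem hmem, Finset.card_range]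
        omega
      · have h7 := Finset.sum_erase_add (Finset.range (j+1)) id hmem
        have h5 : ∑ i ∈ Finset.range (j+1), i = (∑ i ∈ Finset.range j, i) + j :=
          Finset.sum_range_succ _ _
        simp only [id] at h7
        omega
      · intro b hb
        have := Finset.mem_of_mem_erase hb
        rw [Finset.mem_range] at this
        omega
  refine ⟨B.image (fun b => m + d + b), ?_, ?_⟩
  · intro a ha
    rw [Finset.mem_image] at ha
    obtain ⟨b, hb, rfl⟩ := ha
    have hbj := hBmem b hb
    omega
  · rw [Finset.sum_image (by intro a _ b _ h; simp only at h; omega)]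
    have hsum : ∑ b ∈ B, (m + d + b) = B.card * (m + d) + ∑ b ∈ B, b := by
      rw [Finset.sum_add_distrib]
      simp [Finset.sum_const, mul_comm]
    rw [hsum, hBcard, hBsum]
    have e1 := minS_eq m j
    have hexp : j * (m + d) = m * j + j * d := by ring
    omega

/-- full characterization of the subset sums -/
lemma subset_sum_char (m : ℕ) (hm : 1 ≤ m) (c : ℕ) :
    (∃ I : Finset ℕ, I ⊆ Finset.range (m+1) ∧ c = ∑ i ∈ I, (2*m - i)) ↔
      (c = 0 ∨ (m ≤ c ∧ c + m ≤ Ksum m) ∨ c = Ksum m) := by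
  classical
  constructor
  · rintro ⟨I, hI, rfl⟩
    by_cases h0 : I = ∅
    · subst h0; left; simp
    · by_cases hful : I = Finset.range (m+1)
      · subst hful; right; right; rfl
      · right; left
        obtain ⟨i0, hi0⟩ := Finset.nonempty_of_ne_empty h0
        have hi0m : i0 ≤ m := by
          have := hI hi0
          rw [Finset.mem_range] at this
          omega
        constructor
        · calc m ≤ 2*m - i0 := by omega
          _ ≤ ∑ i ∈ I, (2*m - i) := Finset.single_le_sum (f := fun i => 2*m - i) (by omega) hi0
        · -- complement nonempty
          obtain ⟨i1, hi1r, hi1⟩ : ∃ i1 ∈ Finset.range (m+1), i1 ∉ I := by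
            by_contra hcon
            push_neg at hcon
            exact hful (Finset.Subset.antisymm hI hcon)
          have hsplit : ∑ i ∈ I, (2*m - i) + ∑ i ∈ Finset.range (m+1) \ I, (2*m - i)
              = Ksum m := by
            rw [Ksum, ← Finset.sum_sdiff hI]
            omega
          have hterm : m ≤ ∑ i ∈ Finset.range (m+1) \ I, (2*m - i) := by
            have hmem : i1 ∈ Finset.range (m+1) \ I := Finset.mem_sdiff.mpr ⟨hi1r, hi1⟩
            rw [Finset.mem_range] at hi1r
            calc m ≤ 2*m - i1 := by omega
            _ ≤ _ := Finset.single_le_sum (f := fun i => 2*m - i) (by omega) hmem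
          omega
  · rintro (rfl | ⟨h1, h2⟩ | rfl)
    · exact ⟨∅, by simp, by simp⟩
    · obtain ⟨A, hAmem, hAsum⟩ := exists_subset_sum m hm h1 h2
      refine ⟨A.image (fun a => 2*m - a), ?_, ?_⟩
      · intro i hi
        rw [Finset.mem_image] at hi
        obtain ⟨a, ha, rfl⟩ := hi
        rw [Finset.mem_range]
        have := hAmem a ha
        omega
      · rw [Finset.sum_image (by intro a ha b hb hab; have := hAmem a ha; have := hAmem b hb; simp only at hab; omega)]
        rw [hAsum]
        apply Finset.sum_congr rfl
        intro a ha
        have := hAmem a ha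
        omega
    · exact ⟨Finset.range (m+1), le_refl _, rfl⟩


section Repr

lemma cast_term (m i : ℕ) (hi : i ≤ m) : ((2*m - i : ℕ) : ℝ) = 2*(m:ℝ) - i := by
  have h : i ≤ 2*m := by omega
  push_cast [Nat.cast_sub h]
  ring

lemma summable_qpow {q : ℝ} (hq : 0 < q) (hq1 : q < 1) :
    Summable (fun n : ℕ => q ^ (n+1)) := by
  have h1 : Summable (fun n : ℕ => q ^ n) := summable_geometric_of_lt_one hq.le hq1
  have h2 := h1.mul_left q
  have h3 : (fun n : ℕ => q * q ^ n) = fun n : ℕ => q ^ (n+1) := by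
    funext n; rw [pow_succ]; ring
  rwa [h3] at h2

lemma summable_pairF (m : ℕ) {q : ℝ} (hq : 0 < q) (hq1 : q < 1) :
    Summable (fun p : ℕ × Fin (m+1) => (2*(m:ℝ) - ((p.2 : ℕ):ℝ)) * q ^ (p.1+1)) := by
  have hnn : ∀ p : ℕ × Fin (m+1), 0 ≤ (2*(m:ℝ) - ((p.2 : ℕ):ℝ)) * q ^ (p.1+1) := by
    intro p
    have h1 : ((p.2 : ℕ):ℝ) ≤ m := by
      have := Fin.is_le p.2
      exact_mod_cast this
    have h2 : (0:ℝ) < q ^ (p.1+1) := pow_pos hq _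
    nlinarith [Nat.cast_nonneg (α := ℝ) m]
  rw [summable_prod_of_nonneg hnn]
  constructor
  · intro n; exact Summable.of_finite
  · have heq : (fun n : ℕ => ∑' i : Fin (m+1), (2*(m:ℝ) - ((i : ℕ):ℝ)) * q ^ (n+1))
        = fun n : ℕ => (∑ i : Fin (m+1), (2*(m:ℝ) - ((i : ℕ):ℝ))) * q ^ (n+1) := by
      funext n
      rw [tsum_fintype, Finset.sum_mul]
    rw [heq]
    exact (summable_qpow hq hq1).mul_left _

lemma mgSeq_comp (m : ℕ) (q : ℝ) :
    (fun p : ℕ × Fin (m+1) => (2*(m:ℝ) - ((p.2 : ℕ):ℝ)) * q ^ (p.1+1)) ∘ (Nat.divModEquiv (m+1))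
      = mgSeq (fun i => 2*(m:ℝ) - i) (m+1) q := rfl

lemma summable_mgSeq (m : ℕ) {q : ℝ} (hq : 0 < q) (hq1 : q < 1) :
    Summable (mgSeq (fun i => 2*(m:ℝ) - i) (m+1) q) := by
  have h := summable_pairF m hq hq1
  have h2 := (Equiv.summable_iff (Nat.divModEquiv (m+1))).mpr h
  rwa [mgSeq_comp] at h2

lemma mgSeq_pos (m : ℕ) (hm : 1 ≤ m) {q : ℝ} (hq : 0 < q) (n : ℕ) :
    0 < mgSeq (fun i => 2*(m:ℝ) - i) (m+1) q n := by
  have h1 : n % (m+1) < m + 1 := Nat.mod_lt n (Nat.succ_pos m)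
  have h2 : ((n % (m+1) : ℕ):ℝ) ≤ m := by
    have : n % (m+1) ≤ m := by omega
    exact_mod_cast this
  have h3 : (0:ℝ) < q ^ (n/(m+1)+1) := pow_pos hq _
  have h4 : (0:ℝ) < 2*(m:ℝ) - (n % (m+1) : ℕ) := by
    have hm' : (1:ℝ) ≤ m := by exact_mod_cast hm
    nlinarith
  exact mul_pos h4 h3

lemma divMod_symm_div (m : ℕ) (n : ℕ) (i : Fin (m+1)) :
    ((Nat.divModEquiv (m+1)).symm (n, i)) / (m+1) = n ∧
    ((Nat.divModEquiv (m+1)).symm (n, i)) % (m+1) = (i : ℕ) := by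
  have h := (Nat.divModEquiv (m+1)).apply_symm_apply (n, i)
  have h1 : (((Nat.divModEquiv (m+1)) ((Nat.divModEquiv (m+1)).symm (n, i))).1) = n := by rw [h]
  have h2 : ((((Nat.divModEquiv (m+1)) ((Nat.divModEquiv (m+1)).symm (n, i))).2) : ℕ) = (i:ℕ) := by rw [h]
  exact ⟨h1, h2⟩

lemma achievement_eq (m : ℕ) (hm : 1 ≤ m) {q : ℝ} (hq : 0 < q) (hq1 : q < 1) :
    achievementSet (mgSeq (fun i => 2*(m:ℝ) - i) (m+1) q) = digitSet (Sd m (Ksum m)) q := by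
  classical
  ext x
  constructor
  · rintro ⟨I, hsum⟩
    have hind : HasSum (Set.indicator I (mgSeq (fun i => 2*(m:ℝ) - i) (m+1) q)) x :=
      hasSum_subtype_iff_indicator.mp hsum
    have hpair : HasSum ((Set.indicator I (mgSeq (fun i => 2*(m:ℝ) - i) (m+1) q))
        ∘ (Nat.divModEquiv (m+1)).symm) x :=
      (Equiv.hasSum_iff (Nat.divModEquiv (m+1)).symm).mpr hind
    set s : ℕ → ℕ := fun n =>
      ∑ i ∈ Finset.univ.filter (fun i : Fin (m+1) => (Nat.divModEquiv (m+1)).symm (n, i) ∈ I),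
        (2*m - (i:ℕ)) with hs
    have hfiber : ∀ n : ℕ, HasSum
        (fun i : Fin (m+1) => (Set.indicator I (mgSeq (fun i => 2*(m:ℝ) - i) (m+1) q))
          ((Nat.divModEquiv (m+1)).symm (n, i))) ((s n : ℝ) * q^(n+1)) := by
      intro n
      have h1 := hasSum_fintype (fun i : Fin (m+1) =>
        (Set.indicator I (mgSeq (fun i => 2*(m:ℝ) - i) (m+1) q))
          ((Nat.divModEquiv (m+1)).symm (n, i)))
      convert h1 using 1
      have hterm : ∀ i : Fin (m+1),
          (Set.indicator I (mgSeq (fun i => 2*(m:ℝ) - i) (m+1) q))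
            ((Nat.divModEquiv (m+1)).symm (n, i))
          = if (Nat.divModEquiv (m+1)).symm (n, i) ∈ I
              then ((2*m - (i:ℕ) : ℕ):ℝ) * q^(n+1) else 0 := by
        intro i
        rw [Set.indicator_apply]
        congr 1
        obtain ⟨hd, hmod⟩ := divMod_symm_div m n i
        rw [mgSeq, hd, hmod, cast_term m (i:ℕ) (by omega)]
      rw [Finset.sum_congr rfl (fun i _ => hterm i)]
      rw [Finset.sum_ite, Finset.sum_const_zero, add_zero]
      rw [hs]
      push_cast [Finset.sum_mul]
      rfl
    have hdig : HasSum (fun n => (s n : ℝ) * q^(n+1)) x :=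
      HasSum.prod_fiberwise hpair hfiber
    refine ⟨s, ?_, hdig⟩
    intro n
    have : ∃ If : Finset ℕ, If ⊆ Finset.range (m+1) ∧ s n = ∑ i ∈ If, (2*m - i) := by
      refine ⟨Finset.image Fin.val
        (Finset.univ.filter (fun i : Fin (m+1) => (Nat.divModEquiv (m+1)).symm (n, i) ∈ I)),
        ?_, ?_⟩
      · intro i hi
        rw [Finset.mem_image] at hi
        obtain ⟨i', _, rfl⟩ := hi
        rw [Finset.mem_range]
        exact i'.isLt
      · rw [Finset.sum_image (by intro a _ b _ h; exact Fin.val_injective h), hs]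
    exact (subset_sum_char m hm (s n)).mp this
  · rintro ⟨s, hsval, hsum⟩
    have hchoice : ∀ n, ∃ If : Finset ℕ, If ⊆ Finset.range (m+1) ∧ s n = ∑ i ∈ If, (2*m - i) :=
      fun n => (subset_sum_char m hm (s n)).mpr (hsval n)
    choose T hTsub hTsum using hchoice
    set I : Set ℕ := {j : ℕ | j % (m+1) ∈ T (j / (m+1))} with hI
    set f := Set.indicator I (mgSeq (fun i => 2*(m:ℝ) - i) (m+1) q) with hf
    set g := f ∘ (Nat.divModEquiv (m+1)).symm with hg
    have hfiber : ∀ n : ℕ, HasSum (fun i : Fin (m+1) => g (n, i)) ((s n : ℝ) * q^(n+1)) := by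
      intro n
      have h1 := hasSum_fintype (fun i : Fin (m+1) => g (n, i))
      convert h1 using 1
      have hterm : ∀ i : Fin (m+1), g (n, i)
          = if (i:ℕ) ∈ T n then ((2*m - (i:ℕ) : ℕ):ℝ) * q^(n+1) else 0 := by
        intro i
        obtain ⟨hd, hmod⟩ := divMod_symm_div m n i
        rw [hg]
        show f ((Nat.divModEquiv (m+1)).symm (n, i)) = _
        rw [hf, Set.indicator_apply]
        have hmem : ((Nat.divModEquiv (m+1)).symm (n, i) ∈ I) ↔ ((i:ℕ) ∈ T n) := by
          rw [hI, Set.mem_setOf_eq, hd, hmod]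
        rw [if_congr hmem rfl rfl]
        congr 1
        rw [mgSeq, hd, hmod, cast_term m (i:ℕ) (by omega)]
      rw [Finset.sum_congr rfl (fun i _ => hterm i)]
      have h2 : ∑ i : Fin (m+1), (if (i:ℕ) ∈ T n then ((2*m - (i:ℕ) : ℕ):ℝ) * q^(n+1) else 0)
          = ∑ i ∈ Finset.range (m+1), (if i ∈ T n then ((2*m - i : ℕ):ℝ) * q^(n+1) else 0) :=
        Fin.sum_univ_eq_sum_range (fun i => if i ∈ T n then ((2*m - i : ℕ):ℝ) * q^(n+1) else 0) (m+1)
      rw [h2, ← Finset.sum_filter]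
      have h3 : (Finset.range (m+1)).filter (fun i => i ∈ T n) = T n := by
        rw [Finset.filter_mem_eq_inter, Finset.inter_eq_right]
        exact hTsub n
      rw [h3, hTsum n]
      push_cast [Finset.sum_mul]
      rfl
    have hgnonneg : ∀ p : ℕ × Fin (m+1), 0 ≤ g p := by
      rintro ⟨n, i⟩
      rw [hg]
      show 0 ≤ f ((Nat.divModEquiv (m+1)).symm (n, i))
      rw [hf, Set.indicator_apply]
      split
      · exact (mgSeq_pos m hm hq _).le
      · exact le_refl 0
    have hgle : ∀ p : ℕ × Fin (m+1), g p ≤ (2*(m:ℝ) - ((p.2:ℕ):ℝ)) * q ^ (p.1+1) := by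
      rintro ⟨n, i⟩
      rw [hg]
      show f ((Nat.divModEquiv (m+1)).symm (n, i)) ≤ _
      rw [hf, Set.indicator_apply]
      obtain ⟨hd, hmod⟩ := divMod_symm_div m n i
      have heq : mgSeq (fun i => 2*(m:ℝ) - i) (m+1) q ((Nat.divModEquiv (m+1)).symm (n, i))
          = (2*(m:ℝ) - ((i:ℕ):ℝ)) * q ^ (n+1) := by
        rw [mgSeq, hd, hmod]
      split
      · rw [heq]
      · have h1 : ((i : ℕ):ℝ) ≤ m := by exact_mod_cast (Fin.is_le i)
        have h2 : (0:ℝ) < q ^ (n+1) := pow_pos hq _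
        nlinarith [Nat.cast_nonneg (α := ℝ) m]
    have hgsummable : Summable g :=
      Summable.of_nonneg_of_le hgnonneg hgle (summable_pairF m hq hq1)
    have hgsum : HasSum g (∑' p, g p) := hgsummable.hasSum
    have hdig : HasSum (fun n => (s n : ℝ) * q^(n+1)) (∑' p, g p) :=
      HasSum.prod_fiberwise hgsum hfiber
    have hxeq : (∑' p, g p) = x := hdig.unique hsum
    rw [hxeq] at hgsum
    have hfs : HasSum f x := (Equiv.hasSum_iff (Nat.divModEquiv (m+1)).symm).mp hgsum
    exact ⟨I, hasSum_subtype_iff_indicator.mpr hfs⟩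

end Repr

section Sumset

lemma Sd_add_iff (μ M1 M2 : ℕ) (hμ : 1 ≤ μ) (h1 : 3*μ ≤ M1+1) (h2 : 3*μ ≤ M2+1) (c : ℕ) :
    Sd μ (M1+M2) c ↔ ∃ a b, Sd μ M1 a ∧ Sd μ M2 b ∧ c = a + b := by
  constructor
  · rintro (rfl | ⟨hc1, hc2⟩ | rfl)
    · exact ⟨0, 0, Or.inl rfl, Or.inl rfl, rfl⟩
    · by_cases hA : c + μ ≤ M1
      · exact ⟨c, 0, Or.inr (Or.inl ⟨hc1, hA⟩), Or.inl rfl, by omega⟩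
      · by_cases hB : c + 2*μ ≤ M1 + M2
        · by_cases hC : M1 ≤ c
          · refine ⟨M1 - μ, c - M1 + μ, Or.inr (Or.inl ⟨by omega, by omega⟩),
              Or.inr (Or.inl ⟨by omega, by omega⟩), by omega⟩
          · refine ⟨c - μ, μ, Or.inr (Or.inl ⟨by omega, by omega⟩),
              Or.inr (Or.inl ⟨by omega, by omega⟩), by omega⟩
        · refine ⟨M1, c - M1, Or.inr (Or.inr rfl),
            Or.inr (Or.inl ⟨by omega, by omega⟩), by omega⟩
    · exact ⟨M1, M2, Or.inr (Or.inr rfl), Or.inr (Or.inr rfl), rfl⟩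
  · rintro ⟨a, b, ha, hb, rfl⟩
    unfold Sd at *
    omega

lemma summable_digit_seq {q : ℝ} (hq : 0 < q) (hq1 : q < 1) (B : ℕ) {u : ℕ → ℕ}
    (hu : ∀ n, u n ≤ B) : Summable (fun n => ((u n : ℕ):ℝ) * q^(n+1)) := by
  apply Summable.of_nonneg_of_le
    (fun n => mul_nonneg (Nat.cast_nonneg _) (pow_pos hq _).le)
    (fun n => mul_le_mul_of_nonneg_right
      (show ((u n : ℕ):ℝ) ≤ ((B:ℕ):ℝ) by exact_mod_cast hu n) (pow_pos hq (n+1)).le)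
  exact (summable_qpow hq hq1).mul_left ((B:ℕ):ℝ)

lemma digit_add (μ M1 M2 : ℕ) {q : ℝ} (hq : 0 < q) (hq1 : q < 1)
    (hμ : 1 ≤ μ) (h1 : 3*μ ≤ M1 + 1) (h2 : 3*μ ≤ M2 + 1) :
    digitSet (Sd μ M1) q + digitSet (Sd μ M2) q = digitSet (Sd μ (M1+M2)) q := by
  classical
  ext x
  constructor
  · intro hx
    rw [Set.mem_add] at hx
    obtain ⟨x1, hx1, x2, hx2, rfl⟩ := hx
    obtain ⟨u, hu, husum⟩ := hx1
    obtain ⟨v, hv, hvsum⟩ := hx2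
    refine ⟨fun n => u n + v n, fun n => (Sd_add_iff μ M1 M2 hμ h1 h2 _).mpr
      ⟨u n, v n, hu n, hv n, rfl⟩, ?_⟩
    have h3 := husum.add hvsum
    convert h3 using 2 with n
    push_cast
    ring
  · rintro ⟨s, hs, hsum⟩
    have hchoice : ∀ n, ∃ a b, Sd μ M1 a ∧ Sd μ M2 b ∧ s n = a + b :=
      fun n => (Sd_add_iff μ M1 M2 hμ h1 h2 _).mp (hs n)
    choose u v hu hv huv using hchoice
    have husumm : Summable (fun n => ((u n : ℕ):ℝ) * q^(n+1)) :=
      summable_digit_seq hq hq1 M1 (fun n => digit_le_nat (hu n))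
    have hvsumm : Summable (fun n => ((v n : ℕ):ℝ) * q^(n+1)) :=
      summable_digit_seq hq hq1 M2 (fun n => digit_le_nat (hv n))
    have hadd := husumm.hasSum.add hvsumm.hasSum
    have heq : (fun n => ((u n : ℕ):ℝ) * q^(n+1) + ((v n : ℕ):ℝ) * q^(n+1))
        = fun n => ((s n : ℕ):ℝ) * q^(n+1) := by
      funext n
      rw [huv n]
      push_cast
      ring
    rw [heq] at hadd
    have hxeq : x = (∑' n, ((u n : ℕ):ℝ) * q^(n+1)) + (∑' n, ((v n : ℕ):ℝ) * q^(n+1)) :=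
      hsum.unique hadd
    rw [hxeq]
    exact Set.add_mem_add ⟨u, hu, husumm.hasSum⟩ ⟨v, hv, hvsumm.hasSum⟩

lemma sumN_digit (μ M : ℕ) {q : ℝ} (hq : 0 < q) (hq1 : q < 1) (hμ : 1 ≤ μ)
    (hM : 3*μ ≤ M + 1) :
    ∀ k, 1 ≤ k → sumN (digitSet (Sd μ M) q) k = digitSet (Sd μ (k*M)) q := by
  intro k hk
  induction k with
  | zero => omega
  | succ k ih =>
    by_cases hk0 : k = 0
    · subst hk0
      show sumN (digitSet (Sd μ M) q) 0 + digitSet (Sd μ M) q = _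
      have h0 : sumN (digitSet (Sd μ M) q) 0 = {0} := rfl
      rw [h0]
      rw [show (1*M) = M by omega]
      ext x
      simp only [Set.mem_add, Set.mem_singleton_iff]
      constructor
      · rintro ⟨a, rfl, b, hb, rfl⟩
        simpa using hb
      · intro hx
        exact ⟨0, rfl, x, hx, by ring⟩
    · have hk1 : 1 ≤ k := by omega
      show sumN (digitSet (Sd μ M) q) k + digitSet (Sd μ M) q = _
      rw [ih hk1]
      rw [digit_add μ (k*M) M hq hq1 hμ (by nlinarith) hM]
      congr 1
      ring

end Sumset

section Final

lemma Ksum_id (m : ℕ) (hm : 1 ≤ m) : 2 * Ksum m = 3*m*(m+1) := by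
  have e1 := Ksum_eq_max m
  have e2 := maxS_add m m (by omega)
  have e3 := gauss m
  zify [show 1 ≤ m by omega] at e1 e2 e3 ⊢
  linarith

lemma Ksum_real (m : ℕ) (hm : 1 ≤ m) :
    2 * ((Ksum m : ℕ):ℝ) = 3*(m:ℝ)*((m:ℝ)+1) := by
  have := Ksum_id m hm
  exact_mod_cast congrArg (fun n : ℕ => (n:ℝ)) this

set_option maxHeartbeats 1000000 in
lemma main_part (k : ℕ) (hk : 1 ≤ k) (m : ℕ)
    (hm : (1 + 3 * (k : ℝ) + Real.sqrt (9 * (k : ℝ) ^ 2 + 42 * k + 1)) / 6 < m)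
    (q : ℝ) (hlo : 2 / (3 * (m : ℝ) ^ 2 - m + 2) ≤ q)
    (hhi : q < 2 / (3 * (m : ℝ) * k + 3 * k + 2)) :
    IsCantorval (achievementSet (mgSeq (fun i => 2 * (m : ℝ) - i) (m + 1) q)) ∧
    IsCantorval (sumN (achievementSet (mgSeq (fun i => 2 * (m : ℝ) - i) (m + 1) q)) k) := by
  have hk1 : (1:ℝ) ≤ k := by exact_mod_cast hk
  have hsq0 : (0:ℝ) ≤ Real.sqrt (9 * (k : ℝ) ^ 2 + 42 * k + 1) := Real.sqrt_nonneg _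
  have hsqrt_ge : (7:ℝ) ≤ Real.sqrt (9 * (k : ℝ) ^ 2 + 42 * k + 1) := by
    have h1 : (49:ℝ) ≤ 9 * (k : ℝ) ^ 2 + 42 * k + 1 := by nlinarith
    have h2 := Real.sqrt_le_sqrt h1
    rw [show (49:ℝ) = 7^2 by norm_num, Real.sqrt_sq (by norm_num : (0:ℝ) ≤ 7)] at h2
    exact h2
  have hm2 : 2 ≤ m := by
    by_contra hcon
    push_neg at hcon
    have h1 : (m:ℝ) ≤ 1 := by exact_mod_cast Nat.lt_succ_iff.mp hcon
    nlinarith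
  have hm2R : (2:ℝ) ≤ m := by exact_mod_cast hm2
  have hmpos : (0:ℝ) < m := by linarith
  have hm1 : 1 ≤ m := by omega
  have hRHSpos : (0:ℝ) < 6*m - 1 - 3*k := by nlinarith
  have hsqlt : Real.sqrt (9 * (k : ℝ) ^ 2 + 42 * k + 1) < 6*m - 1 - 3*k := by nlinarith
  have hXlt : 9*(k:ℝ)^2 + 42*k + 1 < (6*m - 1 - 3*k)^2 :=
    (Real.sqrt_lt' hRHSpos).mp hsqlt
  have hquad : 3*(m:ℝ)*k + 3*k + 2 < 3*(m:ℝ)^2 - m + 2 := by nlinarith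
  have hD2pos : (0:ℝ) < 3*(m:ℝ)*k + 3*k + 2 := by positivity
  have hD1pos : (0:ℝ) < 3*(m:ℝ)^2 - m + 2 := by nlinarith
  have hqpos : 0 < q := lt_of_lt_of_le (by positivity) hlo
  have hq2 : 2 ≤ q * (3*(m:ℝ)^2 - m + 2) := by
    rw [div_le_iff₀ hD1pos] at hlo
    linarith
  have hq3 : q * (3*(m:ℝ)*k + 3*k + 2) < 2 := by
    rw [lt_div_iff₀ hD2pos] at hhi
    linarith
  have hq1 : q < 1 := by nlinarith
  have hKnat : 2 * Ksum m = 3*m*(m+1) := Ksum_id m hm1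
  have hKR := Ksum_real m hm1
  have hKRq : (2 * ((Ksum m : ℕ):ℝ)) * q = (3*(m:ℝ)*((m:ℝ)+1)) * q := by rw [hKR]
  have hc1 : (3*(m:ℝ)+5)*q ≤ (3*(m:ℝ)*k + 3*k + 2)*q := by
    apply mul_le_mul_of_nonneg_right _ hqpos.le
    nlinarith
  have hc2 : (3*(m:ℝ)+5)*q < 2 := lt_of_le_of_lt hc1 (by linarith [hq3])
  have hyp1 : Hyp m (Ksum m) q := by
    refine ⟨hqpos, hm1, ?_, ?_, ?_, ?_⟩
    · have h4 : 2*(2*m) < 3*m*(m+1) := by nlinarith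
      have h5 : 2*(2*m) < 2*Ksum m := by rw [hKnat]; exact h4
      omega
    · have h4 : 2*(m^2) ≤ 3*m*(m+1) := by nlinarith
      have h5 : 2*(m^2) ≤ 2*Ksum m := by rw [hKnat]; exact h4
      omega
    · nlinarith [hKRq, mul_lt_mul_of_pos_left hc2 hmpos]
    · nlinarith [hKRq, hq2]
  have hyp2 : Hyp m (k * Ksum m) q := by
    have hcast : ((k * Ksum m : ℕ):ℝ) = (k:ℝ) * ((Ksum m : ℕ):ℝ) := by push_cast; ring
    have hKRkq : (2 * ((Ksum m : ℕ):ℝ)) * ((k:ℝ) * q) = (3*(m:ℝ)*((m:ℝ)+1)) * ((k:ℝ) * q) := by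
      rw [hKR]
    refine ⟨hqpos, hm1, ?_, ?_, ?_, ?_⟩
    · calc 2*m < Ksum m := hyp1.h2μ
      _ ≤ k * Ksum m := Nat.le_mul_of_pos_left _ (by omega)
    · calc m^2 ≤ Ksum m := hyp1.hμ2
      _ ≤ k * Ksum m := Nat.le_mul_of_pos_left _ (by omega)
    · rw [hcast]
      nlinarith [hKRkq, mul_lt_mul_of_pos_left hq3 hmpos]
    · rw [hcast]
      have h6 : 0 ≤ ((k:ℝ)-1) * ((Ksum m : ℕ):ℝ) * q :=
        mul_nonneg (mul_nonneg (by linarith) (Nat.cast_nonneg _)) hqpos.le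
      nlinarith [hyp1.hfill, h6]
  have hMcond : 3*m ≤ Ksum m + 1 := by
    have h4 : 2*(3*m) ≤ 3*m*(m+1) + 2 := by nlinarith
    have h5 : 2*(3*m) ≤ 2*Ksum m + 2 := by rw [hKnat]; exact h4
    omega
  rw [achievement_eq m hm1 hqpos hq1]
  constructor
  · exact hyp1.isCantorval_digitSet
  · rw [sumN_digit m (Ksum m) hqpos hq1 hm1 hMcond k hk]
    exact hyp2.isCantorval_digitSet

end Final

end Stmt9

/-- For every k ≥ 1 there exists an achievable Cantorval D whose k-fold
sum is a Cantorval; specifically, for any natural m > (1+3k+√(9k²+42k+1))/6 and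
q ∈ [2/(3m²-m+2), 2/(3mk+3k+2)), the set D = A(2m, 2m-1, ..., m+1, m; q) works. -/
theorem stmt_9 (k : ℕ) (hk : 1 ≤ k) :
    (∃ D : Set ℝ, (∃ a : ℕ → ℝ, (∀ n, 0 < a n) ∧ Summable a ∧ D = achievementSet a) ∧
      IsCantorval D ∧ IsCantorval (sumN D k)) ∧
    (∀ m : ℕ, (1 + 3 * (k : ℝ) + Real.sqrt (9 * (k : ℝ) ^ 2 + 42 * k + 1)) / 6 < m →
      ∀ q : ℝ, 2 / (3 * (m : ℝ) ^ 2 - m + 2) ≤ q → q < 2 / (3 * (m : ℝ) * k + 3 * k + 2) →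
        IsCantorval (achievementSet (mgSeq (fun i => 2 * (m : ℝ) - i) (m + 1) q)) ∧
        IsCantorval (sumN (achievementSet (mgSeq (fun i => 2 * (m : ℝ) - i) (m + 1) q)) k)) := by
  have hk1 : (1:ℝ) ≤ k := by exact_mod_cast hk
  constructor
  · obtain ⟨m₀, hm₀def⟩ : ∃ n : ℕ, n = 3*k+1 := ⟨_, rfl⟩
    have hm₀cast : ((m₀ : ℕ):ℝ) = 3*(k:ℝ)+1 := by rw [hm₀def]; push_cast; ring
    have hm₀1 : 1 ≤ m₀ := by omega
    have hm₀ : (1 + 3*(k:ℝ) + Real.sqrt (9*(k:ℝ)^2 + 42*k + 1))/6 < (m₀:ℝ) := by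
      have hpos : (0:ℝ) < 15*(k:ℝ) + 5 := by positivity
      have h1 : Real.sqrt (9*(k:ℝ)^2+42*k+1) < 15*(k:ℝ)+5 := by
        rw [Real.sqrt_lt' hpos]
        nlinarith
      rw [hm₀cast]
      nlinarith
    have hD1pos : (0:ℝ) < 3*((m₀:ℕ):ℝ)^2 - (m₀:ℝ) + 2 := by rw [hm₀cast]; nlinarith
    have hD2pos : (0:ℝ) < 3*((m₀:ℕ):ℝ)*(k:ℝ) + 3*(k:ℝ) + 2 := by positivity
    obtain ⟨q₀, hq₀def⟩ : ∃ q : ℝ, q = 2 / (3*((m₀:ℕ):ℝ)^2 - (m₀:ℝ) + 2) := ⟨_, rfl⟩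
    have hlo : 2 / (3 * ((m₀:ℕ) : ℝ) ^ 2 - (m₀:ℝ) + 2) ≤ q₀ := le_of_eq hq₀def.symm
    have hhi : q₀ < 2 / (3 * ((m₀:ℕ) : ℝ) * (k:ℝ) + 3 * (k:ℝ) + 2) := by
      rw [hq₀def]
      apply div_lt_div_of_pos_left (by norm_num) hD2pos
      rw [hm₀cast]
      nlinarith
    have hq₀pos : 0 < q₀ := by rw [hq₀def]; exact div_pos (by norm_num) hD1pos
    have hq₀1 : q₀ < 1 := by
      rw [hq₀def, div_lt_one hD1pos, hm₀cast]
      nlinarith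
    have hmain := Stmt9.main_part k hk m₀ hm₀ q₀ hlo hhi
    exact ⟨achievementSet (mgSeq (fun i => 2*((m₀:ℕ):ℝ) - i) (m₀+1) q₀),
      ⟨mgSeq (fun i => 2*((m₀:ℕ):ℝ) - i) (m₀+1) q₀,
        fun n => Stmt9.mgSeq_pos m₀ hm₀1 hq₀pos n,
        Stmt9.summable_mgSeq m₀ hq₀pos hq₀1, rfl⟩, hmain.1, hmain.2⟩
  · intro m hm q hlo hhi
    exact Stmt9.main_part k hk m hm q hlo hhi
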